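/- arXiv:1706.07715 — 12 statements merged into one kernel-verified Lean document; each statement's English description precedes it below -/
import Mathlib

section
/- In a real inner product space, for x, y and ε ∈ [0,1), x ⊥_D^ε y (i.e., ‖x + λy‖ ≥ √(1−ε²)‖x‖ for all real λ) holds if and only if x ⊥_B^ε y (i.e., ‖x + λy‖² ≥ ‖x‖² − 2ε‖x‖‖λy‖ for all real λ). -/
/-! Both notions of approximate orthogonality are equivalent to the inner-product bound
`|⟪x, y⟫| ≤ ε ‖x‖ ‖y‖`. Expanding `‖x + λy‖²` and bounding `2λ⟪x, y⟫` below by `-2ε‖x‖‖λy‖` gives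
`‖x + λy‖² ≥ ‖x‖² - 2ε‖x‖‖λy‖ + ‖λy‖²`, which yields Birkhoff's condition at once and Dragomir's
after completing the square. Conversely, Dragomir's condition at the minimiser
`λ = -⟪x, y⟫ / ‖y‖²` is the squared bound, and Birkhoff's condition, divided by `|λ|` with
`λ → 0±`, is the bound itself. -/

open Filter Topology RealInnerProductSpace

section ApproxOrthogonal

variable {E : Type*} [SeminormedAddCommGroup E]

def ApproxDragomirOrthogonal [NormedSpace ℝ E] (ε : ℝ) (x y : E) : Prop :=
  ∀ l : ℝ, ‖x + l • y‖ ≥ Real.sqrt (1 - ε ^ 2) * ‖x‖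

def ApproxBirkhoffOrthogonal [NormedSpace ℝ E] (ε : ℝ) (x y : E) : Prop :=
  ∀ l : ℝ, ‖x + l • y‖ ^ 2 ≥ ‖x‖ ^ 2 - 2 * ε * ‖x‖ * ‖l • y‖

lemma nonneg_of_forall_pos_mul_add_sq_nonneg {a b : ℝ} (h : ∀ t > 0, 0 ≤ a * t + b * t ^ 2) :
    0 ≤ a := by
  have hlim : Tendsto (fun t : ℝ => a + b * t) (𝓝[>] 0) (𝓝 a) :=
    tendsto_nhdsWithin_of_tendsto_nhds <|
      (by fun_prop : Continuous fun t : ℝ => a + b * t).tendsto' 0 a (by simp)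
  refine ge_of_tendsto hlim (eventually_nhdsWithin_of_forall fun t (ht : 0 < t) => ?_)
  exact nonneg_of_mul_nonneg_right (by linarith [h t ht]) ht

variable [InnerProductSpace ℝ E]

lemma norm_add_smul_sq (x y : E) (l : ℝ) :
    ‖x + l • y‖ ^ 2 = ‖x‖ ^ 2 + 2 * l * ⟪x, y⟫ + l ^ 2 * ‖y‖ ^ 2 := by
  rw [norm_add_sq_real, real_inner_smul_right, norm_smul, Real.norm_eq_abs, mul_pow, sq_abs]
  ring

lemma norm_add_smul_sq_ge_of_abs_inner_le {ε : ℝ} {x y : E} (h : |⟪x, y⟫| ≤ ε * ‖x‖ * ‖y‖)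
    (l : ℝ) : ‖x‖ ^ 2 - 2 * ε * ‖x‖ * ‖l • y‖ + ‖l • y‖ ^ 2 ≤ ‖x + l • y‖ ^ 2 := by
  have hinner : -(ε * ‖x‖ * ‖l • y‖) ≤ l * ⟪x, y⟫ := by
    rw [norm_smul, Real.norm_eq_abs]
    calc -(ε * ‖x‖ * (|l| * ‖y‖)) = -(|l| * (ε * ‖x‖ * ‖y‖)) := by ring
      _ ≤ -(|l| * |⟪x, y⟫|) := neg_le_neg (mul_le_mul_of_nonneg_left h (abs_nonneg l))
      _ = -|l * ⟪x, y⟫| := by rw [abs_mul]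
      _ ≤ l * ⟪x, y⟫ := neg_abs_le _
  have hly : ‖l • y‖ ^ 2 = l ^ 2 * ‖y‖ ^ 2 := by
    rw [norm_smul, Real.norm_eq_abs, mul_pow, sq_abs]
  rw [norm_add_smul_sq, hly]
  linarith

lemma approxBirkhoffOrthogonal_iff_abs_inner_le (ε : ℝ) (x y : E) :
    ApproxBirkhoffOrthogonal ε x y ↔ |⟪x, y⟫| ≤ ε * ‖x‖ * ‖y‖ := by
  refine ⟨fun hB => abs_le.2 ⟨?_, ?_⟩, fun h l => ?_⟩
  · have : 0 ≤ 2 * (⟪x, y⟫ + ε * ‖x‖ * ‖y‖) := by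
      refine nonneg_of_forall_pos_mul_add_sq_nonneg (b := ‖y‖ ^ 2) fun t ht => ?_
      have := hB t
      rw [norm_add_smul_sq, norm_smul, Real.norm_eq_abs, abs_of_pos ht] at this
      linarith
    linarith
  · have : 0 ≤ 2 * (-⟪x, y⟫ + ε * ‖x‖ * ‖y‖) := by
      refine nonneg_of_forall_pos_mul_add_sq_nonneg (b := ‖y‖ ^ 2) fun t ht => ?_
      have := hB (-t)
      rw [norm_add_smul_sq, norm_smul, Real.norm_eq_abs, abs_neg, abs_of_pos ht] at this
      linarith
    linarith
  · linarith [norm_add_smul_sq_ge_of_abs_inner_le h l, sq_nonneg ‖l • y‖]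

lemma norm_add_smul_sq_of_eq_neg_inner_div (x y : E) (hy : ‖y‖ ≠ 0) :
    ‖x + (-(⟪x, y⟫ / ‖y‖ ^ 2)) • y‖ ^ 2 = ‖x‖ ^ 2 - ⟪x, y⟫ ^ 2 / ‖y‖ ^ 2 := by
  rw [norm_add_smul_sq]
  field_simp
  ring

lemma abs_inner_le_of_approxDragomirOrthogonal {ε : ℝ} (hε0 : 0 ≤ ε) (hε1 : ε ≤ 1) {x y : E}
    (hD : ApproxDragomirOrthogonal ε x y) : |⟪x, y⟫| ≤ ε * ‖x‖ * ‖y‖ := by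
  rcases eq_or_ne ‖y‖ 0 with hy | hy
  · simpa [hy] using abs_real_inner_le_norm x y
  have hD_sq : (1 - ε ^ 2) * ‖x‖ ^ 2 ≤ ‖x‖ ^ 2 - ⟪x, y⟫ ^ 2 / ‖y‖ ^ 2 := by
    rw [← norm_add_smul_sq_of_eq_neg_inner_div x y hy,
      ← Real.sq_sqrt (by nlinarith : (0 : ℝ) ≤ 1 - ε ^ 2), ← mul_pow]
    exact pow_le_pow_left₀ (by positivity) (hD _) 2
  have hy2 : 0 < ‖y‖ ^ 2 := by positivity
  have hsq : ⟪x, y⟫ ^ 2 ≤ (ε * ‖x‖ * ‖y‖) ^ 2 := by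
    have : ⟪x, y⟫ ^ 2 / ‖y‖ ^ 2 ≤ ε ^ 2 * ‖x‖ ^ 2 := by linarith
    rw [div_le_iff₀ hy2] at this
    linarith
  exact abs_le_of_sq_le_sq hsq (by positivity)

lemma approxDragomirOrthogonal_of_abs_inner_le {ε : ℝ} {x y : E}
    (h : |⟪x, y⟫| ≤ ε * ‖x‖ * ‖y‖) : ApproxDragomirOrthogonal ε x y := by
  intro l
  have hsq : (1 - ε ^ 2) * ‖x‖ ^ 2 ≤ ‖x + l • y‖ ^ 2 := by
    nlinarith [norm_add_smul_sq_ge_of_abs_inner_le h l, sq_nonneg (‖l • y‖ - ε * ‖x‖)]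
  calc Real.sqrt (1 - ε ^ 2) * ‖x‖ = Real.sqrt ((1 - ε ^ 2) * ‖x‖ ^ 2) := by
        rw [Real.sqrt_mul' _ (sq_nonneg _), Real.sqrt_sq (norm_nonneg x)]
    _ ≤ Real.sqrt (‖x + l • y‖ ^ 2) := Real.sqrt_le_sqrt hsq
    _ = ‖x + l • y‖ := Real.sqrt_sq (norm_nonneg _)

lemma approxDragomirOrthogonal_iff_abs_inner_le {ε : ℝ} (hε0 : 0 ≤ ε) (hε1 : ε ≤ 1) (x y : E) :
    ApproxDragomirOrthogonal ε x y ↔ |⟪x, y⟫| ≤ ε * ‖x‖ * ‖y‖ :=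
  ⟨abs_inner_le_of_approxDragomirOrthogonal hε0 hε1, approxDragomirOrthogonal_of_abs_inner_le⟩

end ApproxOrthogonal

theorem approx_orth_coincide_inner {X : Type*} [NormedAddCommGroup X] [InnerProductSpace ℝ X]
    (x y : X) (ε : ℝ) (hε0 : 0 ≤ ε) (hε1 : ε < 1) :
    (∀ l : ℝ, ‖x + l • y‖ ≥ Real.sqrt (1 - ε ^ 2) * ‖x‖) ↔
      (∀ l : ℝ, ‖x + l • y‖ ^ 2 ≥ ‖x‖ ^ 2 - 2 * ε * ‖x‖ * ‖l • y‖) :=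
  (approxDragomirOrthogonal_iff_abs_inner_le hε0 hε1.le x y).trans
    (approxBirkhoffOrthogonal_iff_abs_inner_le ε x y).symm
end

section
/- In a real inner product space, x ⊥_D^ε y holds if and only if |⟨x, y⟩| ≤ ε‖x‖‖y‖. -/
/-!
Expanding the square, `‖x + l • y‖² - (1 - ε²)‖x‖²` is a quadratic polynomial in `l` with
leading coefficient `‖y‖²`, linear coefficient `2⟪x, y⟫` and constant term `ε²‖x‖²`. For `y ≠ 0`
it is nonnegative everywhere exactly when its discriminant `4⟪x, y⟫² - 4ε²‖x‖²‖y‖²` is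
nonpositive, which is the squared form of `|⟪x, y⟫| ≤ ε‖x‖‖y‖`.
-/

open RealInnerProductSpace

theorem quadratic_nonneg_iff_discrim_nonpos {K : Type*} [Field K] [LinearOrder K]
    [IsStrictOrderedRing K] {a b c : K} (ha : 0 < a) :
    (∀ x : K, 0 ≤ a * (x * x) + b * x + c) ↔ discrim a b c ≤ 0 := by
  refine ⟨discrim_le_zero, fun h x => ?_⟩
  have hsq : 4 * a * (a * (x * x) + b * x + c) = (2 * a * x + b) ^ 2 - discrim a b c := by
    rw [discrim]; ring
  have hprod : 0 ≤ 4 * a * (a * (x * x) + b * x + c) := by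
    rw [hsq]; nlinarith [sq_nonneg (2 * a * x + b)]
  exact nonneg_of_mul_nonneg_right hprod (by positivity)

theorem Real.sqrt_mul_le_iff_mul_sq_le {c t s : ℝ} (ht : 0 ≤ t) (hs : 0 ≤ s) :
    √c * t ≤ s ↔ c * t ^ 2 ≤ s ^ 2 := by
  rw [← Real.sqrt_sq ht, ← Real.sqrt_mul' c (sq_nonneg t), Real.sqrt_sq ht,
    Real.sqrt_le_left hs]

section InnerProductSpace

variable {X : Type*} [NormedAddCommGroup X] [InnerProductSpace ℝ X]

theorem norm_add_smul_sq_real (x y : X) (l : ℝ) :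
    ‖x + l • y‖ ^ 2 = ‖y‖ ^ 2 * (l * l) + 2 * ⟪x, y⟫ * l + ‖x‖ ^ 2 := by
  rw [norm_add_sq_real, real_inner_smul_right, norm_smul, Real.norm_eq_abs, mul_pow, sq_abs]
  ring

theorem forall_sq_le_norm_add_smul_sq_iff (x y : X) (ε : ℝ) :
    (∀ l : ℝ, (1 - ε ^ 2) * ‖x‖ ^ 2 ≤ ‖x + l • y‖ ^ 2) ↔
      ⟪x, y⟫ ^ 2 ≤ ε ^ 2 * ‖x‖ ^ 2 * ‖y‖ ^ 2 := by
  rcases eq_or_ne y 0 with rfl | hy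
  · simp only [smul_zero, add_zero, inner_zero_right, norm_zero]
    exact iff_of_true (fun _ => by nlinarith [sq_nonneg ε, sq_nonneg ‖x‖]) (by simp)
  have hdiff (l : ℝ) : ‖x + l • y‖ ^ 2 - (1 - ε ^ 2) * ‖x‖ ^ 2 =
      ‖y‖ ^ 2 * (l * l) + 2 * ⟪x, y⟫ * l + ε ^ 2 * ‖x‖ ^ 2 := by
    rw [norm_add_smul_sq_real]; ring
  rw [forall_congr' fun l => by rw [← sub_nonneg, hdiff],
    quadratic_nonneg_iff_discrim_nonpos (by positivity), discrim]
  constructor <;> intro h <;> linarith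

end InnerProductSpace

theorem dragomir_orth_iff_inner_general {X : Type*} [NormedAddCommGroup X] [InnerProductSpace ℝ X]
    (x y : X) (ε : ℝ) (hε0 : 0 ≤ ε) :
    (∀ l : ℝ, ‖x + l • y‖ ≥ Real.sqrt (1 - ε ^ 2) * ‖x‖) ↔
      |(inner ℝ x y : ℝ)| ≤ ε * ‖x‖ * ‖y‖ := by
  simp only [ge_iff_le, Real.sqrt_mul_le_iff_mul_sq_le (norm_nonneg x) (norm_nonneg _),
    forall_sq_le_norm_add_smul_sq_iff]
  rw [← sq_le_sq₀ (abs_nonneg _) (by positivity : 0 ≤ ε * ‖x‖ * ‖y‖), sq_abs, mul_pow, mul_pow]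

theorem dragomir_orth_iff_inner {X : Type*} [NormedAddCommGroup X] [InnerProductSpace ℝ X]
    (x y : X) (ε : ℝ) (hε0 : 0 ≤ ε) (hε1 : ε < 1) :
    (∀ l : ℝ, ‖x + l • y‖ ≥ Real.sqrt (1 - ε ^ 2) * ‖x‖) ↔
      |(inner ℝ x y : ℝ)| ≤ ε * ‖x‖ * ‖y‖ :=
  dragomir_orth_iff_inner_general x y ε hε0
end

section
/- Let X be a real normed space, x ∈ X, and ε ∈ [0,1). If there exists z in the span of {x,y} with x Birkhoff-James orthogonal to z (‖x + λz‖ ≥ ‖x‖ for all real λ) and ‖z − y‖ ≤ ε‖y‖, then x ⊥_B^ε y, i.e., ‖x + λy‖² ≥ ‖x‖² − 2ε‖x‖‖λy‖ for all real λ. -/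
theorem chmielinski_orth_of_exists_z {X : Type*} [NormedAddCommGroup X] [NormedSpace ℝ X]
    (x y : X) (ε : ℝ) (hε0 : 0 ≤ ε) (hε1 : ε < 1)
    (h : ∃ z ∈ Submodule.span ℝ ({x, y} : Set X),
      (∀ l : ℝ, ‖x + l • z‖ ≥ ‖x‖) ∧ ‖z - y‖ ≤ ε * ‖y‖) :
    ∀ l : ℝ, ‖x + l • y‖ ^ 2 ≥ ‖x‖ ^ 2 - 2 * ε * ‖x‖ * ‖l • y‖ := by
  obtain ⟨z, -, hz, hzy⟩ := h
  intro l
  have h1 : ‖x + l • y‖ ≥ ‖x + l • z‖ - ‖l • (y - z)‖ := by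
    have : x + l • y = (x + l • z) + l • (y - z) := by
      rw [smul_sub]; abel
    rw [this]
    have := norm_le_add_norm_add (x + l • z) (l • (y - z))
    linarith
  have h2 : ‖l • (y - z)‖ ≤ ε * ‖l • y‖ := by
    rw [norm_smul, norm_smul]
    have : ‖y - z‖ ≤ ε * ‖y‖ := by rw [norm_sub_rev]; exact hzy
    calc ‖l‖ * ‖y - z‖ ≤ ‖l‖ * (ε * ‖y‖) := by
          exact mul_le_mul_of_nonneg_left this (norm_nonneg l)
      _ = ε * (‖l‖ * ‖y‖) := by ring
  have h3 : ‖x + l • y‖ ≥ ‖x‖ - ε * ‖l • y‖ := by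
    have := hz l
    linarith
  have hb : (0:ℝ) ≤ ‖x + l • y‖ := norm_nonneg _
  have hc : (0:ℝ) ≤ ‖x‖ := norm_nonneg _
  have ha : (0:ℝ) ≤ ‖l • y‖ := norm_nonneg _
  rcases le_or_gt (ε * ‖l • y‖) ‖x‖ with hcase | hcase
  · nlinarith [sq_nonneg (ε * ‖l • y‖)]
  · nlinarith [sq_nonneg ‖x + l • y‖, mul_nonneg (mul_nonneg hε0 ha) hc]
end

section
/- Let X be a real normed space, x, y ∈ S_X with x ⊥_B y, and ε ∈ (0,1). If z ∈ S_X satisfies ‖z − y‖ ≤ (1 − √(1−ε²))/(1 + √(1−ε²)), then x ⊥_D^ε z, i.e., ‖x + λz‖ ≥ √(1−ε²) for all λ ∈ ℝ. -/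
theorem approx_orth_of_close {X : Type*} [NormedAddCommGroup X] [NormedSpace ℝ X]
    (x y z : X) (hx : ‖x‖ = 1) (hy : ‖y‖ = 1) (hz : ‖z‖ = 1)
    (hxy : ∀ l : ℝ, ‖x + l • y‖ ≥ ‖x‖) (ε : ℝ) (hε0 : 0 < ε) (hε1 : ε < 1)
    (hzy : ‖z - y‖ ≤ (1 - Real.sqrt (1 - ε ^ 2)) / (1 + Real.sqrt (1 - ε ^ 2))) :
    ∀ l : ℝ, ‖x + l • z‖ ≥ Real.sqrt (1 - ε ^ 2) := by
  intro l
  set s := Real.sqrt (1 - ε ^ 2) with hs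
  have hε2 : 0 < 1 - ε ^ 2 := by nlinarith
  have hs0 : 0 < s := Real.sqrt_pos.mpr hε2
  have hs1 : s < 1 := by
    nlinarith [Real.sq_sqrt hε2.le, Real.sqrt_nonneg (1 - ε ^ 2)]
  have hden : 0 < 1 + s := by linarith
  set δ := (1 - s) / (1 + s) with hδ
  have hδpos : 0 < δ := div_pos (by linarith) hden
  rcases le_or_gt |l| (1 + s) with hl | hl
  · -- ‖x + l z‖ ≥ ‖x + l y‖ - |l| δ ≥ 1 - (1+s)δ = s
    have h1 : ‖x + l • y‖ - ‖l • z - l • y‖ ≤ ‖x + l • z‖ := by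
      have := norm_sub_norm_le (x + l • y) (l • y - l • z)
      have e : x + l • y - (l • y - l • z) = x + l • z := by abel
      rw [e] at this
      calc ‖x + l • y‖ - ‖l • z - l • y‖
          = ‖x + l • y‖ - ‖l • y - l • z‖ := by rw [norm_sub_rev]
        _ ≤ ‖x + l • z‖ := this
    have h2 : ‖l • z - l • y‖ ≤ |l| * δ := by
      rw [← smul_sub, norm_smul, Real.norm_eq_abs]
      exact mul_le_mul_of_nonneg_left hzy (abs_nonneg l)
    have h3 : (1:ℝ) ≤ ‖x + l • y‖ := by
      have := hxy l; rwa [hx] at this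
    have h4 : |l| * δ ≤ (1 + s) * δ := mul_le_mul_of_nonneg_right hl (le_of_lt hδpos)
    have h5 : (1 + s) * δ = 1 - s := by
      rw [hδ]; field_simp
    linarith
  · -- ‖x + l z‖ ≥ |l| - 1 ≥ s
    have h1 : ‖l • z‖ - ‖x‖ ≤ ‖x + l • z‖ := by
      have := norm_sub_norm_le (l • z) (-x)
      simpa [sub_neg_eq_add, add_comm] using this
    rw [norm_smul, Real.norm_eq_abs, hz, hx] at h1
    linarith
end

section
/- Let X be a two-dimensional real Banach space, x ∈ S_X, and ε ∈ [0,1). Then there exist v₁, v₂ ∈ S_X such that the normal cone K = {αv₁ + βv₂ : α, β ≥ 0} satisfies F(x, ε) = K ∪ (−K), where F(x, ε) = {y ∈ X : ‖x + λy‖ ≥ √(1−ε²) for all λ ∈ ℝ}. -/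
/-!
By Hahn–Banach in `X ⧸ ℝ ∙ y`, the vector `y` lies in `F(x, ε)` iff some functional `f` with
`f x = 1` and `‖f‖ ≤ c⁻¹`, where `c = √(1 - ε²)`, vanishes at `y`. In dimension two the functionals
with `f x = 1` form a line `φ + s • ψ`, and the admissible parameters `s` form a compact interval
`[a, b]`. The kernel of `φ + s • ψ` is spanned by `e - s • x`, so `F(x, ε)` is the union of the
lines through the segment `[e - a • x, e - b • x]`, i.e. the double cone over its endpoints.
-/

open Set Module

def pairCone {X : Type*} [AddCommGroup X] [Module ℝ X] (u v : X) : Set X :=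
  {w | ∃ α β : ℝ, 0 ≤ α ∧ 0 ≤ β ∧ w = α • u + β • v}

section PairCone

variable {X : Type*} [AddCommGroup X] [Module ℝ X] {u v w : X}

theorem pairCone_smul_smul {r t : ℝ} (hr : 0 < r) (ht : 0 < t) :
    pairCone (r • u) (t • v) = pairCone u v := by
  ext w
  constructor
  · rintro ⟨α, β, hα, hβ, rfl⟩
    exact ⟨α * r, β * t, by positivity, by positivity, by simp [smul_smul]⟩
  · rintro ⟨α, β, hα, hβ, rfl⟩
    exact ⟨α / r, β / t, by positivity, by positivity,
      by simp [smul_smul, hr.ne', ht.ne']⟩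

theorem pairCone_inter_neg_eq_singleton_zero {φ : X →ₗ[ℝ] ℝ} (hu : 0 < φ u) (hv : 0 < φ v) :
    pairCone u v ∩ -pairCone u v = {0} := by
  ext w
  constructor
  · rintro ⟨⟨α, β, hα, hβ, rfl⟩, ⟨α', β', hα', hβ', h⟩⟩
    have hsum : (α + α') * φ u + (β + β') * φ v = 0 := by
      have := congrArg φ h
      simp only [map_neg, map_add, map_smul, smul_eq_mul] at this
      linarith
    have hα0 : α = 0 := by nlinarith
    have hβ0 : β = 0 := by nlinarith
    simp [hα0, hβ0]
  · rintro rfl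
    exact ⟨⟨0, 0, le_rfl, le_rfl, by simp⟩, ⟨0, 0, le_rfl, le_rfl, by simp⟩⟩

theorem mem_pairCone_iff :
    w ∈ pairCone u v ↔ ∃ z ∈ segment ℝ u v, ∃ r : ℝ, 0 ≤ r ∧ w = r • z := by
  constructor
  · rintro ⟨α, β, hα, hβ, rfl⟩
    rcases (add_nonneg hα hβ).eq_or_lt with h | h
    · obtain ⟨rfl, rfl⟩ : α = 0 ∧ β = 0 := ⟨by linarith, by linarith⟩
      exact ⟨u, left_mem_segment ℝ u v, 0, le_rfl, by simp⟩
    · refine ⟨(α / (α + β)) • u + (β / (α + β)) • v,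
        ⟨_, _, by positivity, by positivity, by field_simp, rfl⟩, α + β, h.le, ?_⟩
      simp [smul_add, smul_smul, mul_div_cancel₀ _ h.ne']
  · rintro ⟨_, ⟨a, b, ha, hb, -, rfl⟩, r, hr, rfl⟩
    exact ⟨r * a, r * b, by positivity, by positivity, by simp [smul_add, smul_smul]⟩

theorem mem_pairCone_union_neg_iff :
    w ∈ pairCone u v ∪ -pairCone u v ↔ ∃ z ∈ segment ℝ u v, ∃ r : ℝ, w = r • z := by
  simp only [mem_union, mem_neg, mem_pairCone_iff]
  constructor
  · rintro (⟨z, hz, r, -, rfl⟩ | ⟨z, hz, r, -, h⟩)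
    · exact ⟨z, hz, r, rfl⟩
    · exact ⟨z, hz, -r, by rw [neg_smul, ← h, neg_neg]⟩
  · rintro ⟨z, hz, r, rfl⟩
    rcases le_total 0 r with hr | hr
    · exact Or.inl ⟨z, hz, r, hr, rfl⟩
    · exact Or.inr ⟨z, hz, -r, neg_nonneg.2 hr, by rw [neg_smul]⟩

end PairCone

theorem segment_sub_smul_eq_image {X : Type*} [AddCommGroup X] [Module ℝ X] (e x : X) {a b : ℝ}
    (hab : a ≤ b) :
    segment ℝ (e - a • x) (e - b • x) = (fun s : ℝ ↦ e - s • x) '' Icc a b := by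
  rw [← segment_eq_Icc hab]
  convert (image_segment ℝ (AffineMap.lineMap e (e - x)) a b).symm using 1 <;>
    simp [AffineMap.lineMap_apply, sub_eq_neg_add]

theorem exists_setOf_norm_add_smul_le_eq_Icc {E : Type*} [NormedAddCommGroup E] [NormedSpace ℝ E]
    {p q : E} (hq : q ≠ 0) {R : ℝ} (hne : {s : ℝ | ‖p + s • q‖ ≤ R}.Nonempty) :
    ∃ a b : ℝ, {s : ℝ | ‖p + s • q‖ ≤ R} = Icc a b := by
  set I := {s : ℝ | ‖p + s • q‖ ≤ R}
  have hconv : Convex ℝ I := by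
    intro s hs t ht a b ha hb hab
    calc ‖p + (a • s + b • t) • q‖ = ‖a • (p + s • q) + b • (p + t • q)‖ := by
          congr 1
          linear_combination (norm := module) (-hab) • p
      _ ≤ a * ‖p + s • q‖ + b * ‖p + t • q‖ := by
          refine (norm_add_le _ _).trans_eq ?_
          rw [norm_smul, norm_smul, Real.norm_of_nonneg ha, Real.norm_of_nonneg hb]
      _ ≤ a * R + b * R := by gcongr <;> assumption
      _ = R := by rw [← add_mul, hab, one_mul]
  have hclosed : IsClosed I := isClosed_le (by fun_prop) continuous_const
  have hbdd : Bornology.IsBounded I := by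
    refine isBounded_iff_forall_norm_le.2 ⟨(R + ‖p‖) / ‖q‖, fun s hs ↦ ?_⟩
    rw [le_div_iff₀ (norm_pos_iff.2 hq), ← norm_smul]
    calc ‖s • q‖ = ‖(p + s • q) - p‖ := by rw [add_sub_cancel_left]
      _ ≤ ‖p + s • q‖ + ‖p‖ := norm_sub_le _ _
      _ ≤ R + ‖p‖ := by gcongr; exact hs
  exact ⟨_, _, eq_Icc_of_connected_compact ⟨hne, hconv.isPreconnected⟩
    (Metric.isCompact_of_isClosed_isBounded hclosed hbdd)⟩

section Dual

variable {X : Type*} [SeminormedAddCommGroup X] [NormedSpace ℝ X] {x y : X} {c : ℝ}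

theorem exists_dual_of_forall_le_norm_add_smul (hc : 0 < c) (h : ∀ l : ℝ, c ≤ ‖x + l • y‖) :
    ∃ f : StrongDual ℝ X, f x = 1 ∧ f y = 0 ∧ ‖f‖ ≤ c⁻¹ := by
  set S := ℝ ∙ y
  have hdist : c ≤ ‖S.mkQ x‖ := by
    refine (QuotientAddGroup.le_norm_iff (S := S.toAddSubgroup)).2 fun m hm ↦ ?_
    obtain ⟨t, ht⟩ := Submodule.mem_span_singleton.1 (QuotientAddGroup.eq.1 hm)
    convert h (-t) using 2
    rw [neg_smul, ht]
    abel
  obtain ⟨g, hg, hgx⟩ := exists_dual_vector'' ℝ (S.mkQ x)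
  have hd : 0 < ‖S.mkQ x‖ := hc.trans_le hdist
  refine ⟨‖S.mkQ x‖⁻¹ • g.comp S.mkQL, ?_, ?_, ?_⟩
  · change ‖S.mkQ x‖⁻¹ * g (S.mkQ x) = 1
    rw [hgx]
    exact inv_mul_cancel₀ hd.ne'
  · simp [S, (Submodule.Quotient.mk_eq_zero S).2 (Submodule.mem_span_singleton_self y)]
  · calc ‖‖S.mkQ x‖⁻¹ • g.comp S.mkQL‖ ≤ ‖S.mkQ x‖⁻¹ * 1 := by
          rw [norm_smul, Real.norm_of_nonneg (by positivity)]
          gcongr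
          refine ContinuousLinearMap.opNorm_le_bound _ zero_le_one fun w ↦ ?_
          calc ‖g (S.mkQ w)‖ ≤ 1 * ‖S.mkQ w‖ := g.le_of_opNorm_le hg _
            _ ≤ 1 * ‖w‖ := by gcongr; exact Submodule.Quotient.norm_mk_le S w
      _ ≤ c⁻¹ := by rw [mul_one]; gcongr

theorem forall_le_norm_add_smul_iff (hc : 0 < c) :
    (∀ l : ℝ, c ≤ ‖x + l • y‖) ↔ ∃ f : StrongDual ℝ X, f x = 1 ∧ f y = 0 ∧ ‖f‖ ≤ c⁻¹ := by
  refine ⟨exists_dual_of_forall_le_norm_add_smul hc, fun ⟨f, hfx, hfy, hf⟩ l ↦ ?_⟩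
  have : 1 ≤ c⁻¹ * ‖x + l • y‖ :=
    calc 1 = f (x + l • y) := by simp [hfx, hfy]
      _ ≤ ‖f‖ * ‖x + l • y‖ := (le_abs_self _).trans (f.le_opNorm _)
      _ ≤ c⁻¹ * ‖x + l • y‖ := by gcongr
  simpa using (le_inv_mul_iff₀ hc).1 this

end Dual

theorem exists_biorthogonal_of_finrank_eq_two {X : Type*} [NormedAddCommGroup X]
    [NormedSpace ℝ X] (hdim : finrank ℝ X = 2) {x : X} (hx : x ≠ 0) :
    ∃ (e : X) (φ ψ : StrongDual ℝ X),
      φ x = 1 ∧ φ e = 0 ∧ ψ x = 0 ∧ ψ e = 1 ∧ ∀ y, φ y • x + ψ y • e = y := by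
  have : FiniteDimensional ℝ X := Module.finite_of_finrank_eq_succ hdim
  obtain ⟨e, he⟩ : ∃ e : X, e ∉ ℝ ∙ x := by
    by_contra! h
    have := finrank_span_singleton (K := ℝ) hx
    rw [Submodule.eq_top_iff'.2 h, finrank_top, hdim] at this
    norm_num at this
  have hind : LinearIndependent ℝ ![x, e] := by
    rw [LinearIndependent.pair_iff' hx]
    rintro a rfl
    exact he (Submodule.smul_mem _ a (Submodule.mem_span_singleton_self x))
  let B := basisOfLinearIndependentOfCardEqFinrank hind (by simp [hdim])
  have hB0 : B 0 = x := congrFun (coe_basisOfLinearIndependentOfCardEqFinrank hind _) 0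
  have hB1 : B 1 = e := congrFun (coe_basisOfLinearIndependentOfCardEqFinrank hind _) 1
  refine ⟨e, LinearMap.toContinuousLinearMap (B.coord 0),
    LinearMap.toContinuousLinearMap (B.coord 1), ?_, ?_, ?_, ?_, fun y ↦ ?_⟩
  · simp [← hB0]
  · simp [← hB1]
  · simp [← hB0]
  · simp [← hB1]
  · have h := B.sum_repr y
    rw [Fin.sum_univ_two, hB0, hB1] at h
    exact h

section Biorthogonal

variable {X : Type*} [SeminormedAddCommGroup X] [NormedSpace ℝ X] {x e : X} {φ ψ : StrongDual ℝ X}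

variable (hdecomp : ∀ y, φ y • x + ψ y • e = y)
include hdecomp

theorem eq_add_smul_of_apply_eq_one {f : StrongDual ℝ X} (hf : f x = 1) : f = φ + f e • ψ := by
  ext y
  conv_lhs => rw [← hdecomp y]
  simp [hf, mul_comm]

theorem add_smul_apply_eq_zero_iff (hφx : φ x = 1) (hφe : φ e = 0) (hψx : ψ x = 0)
    (hψe : ψ e = 1) {s : ℝ} {y : X} : (φ + s • ψ) y = 0 ↔ ∃ r : ℝ, y = r • (e - s • x) := by
  constructor
  · intro h
    refine ⟨ψ y, ?_⟩
    have hφy : φ y = -(s * ψ y) := by simpa [add_eq_zero_iff_eq_neg] using h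
    conv_lhs => rw [← hdecomp y]
    rw [hφy, smul_sub, smul_smul]
    module
  · rintro ⟨r, rfl⟩
    simp [hφx, hφe, hψx, hψe]

theorem forall_le_norm_add_smul_iff_exists (hφx : φ x = 1) (hφe : φ e = 0) (hψx : ψ x = 0)
    (hψe : ψ e = 1) {c : ℝ} (hc : 0 < c) {y : X} :
    (∀ l : ℝ, c ≤ ‖x + l • y‖) ↔
      ∃ s ∈ {s : ℝ | ‖φ + s • ψ‖ ≤ c⁻¹}, ∃ r : ℝ, y = r • (e - s • x) := by
  rw [forall_le_norm_add_smul_iff hc]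
  constructor
  · rintro ⟨f, hfx, hfy, hf⟩
    have hf_eq := eq_add_smul_of_apply_eq_one hdecomp hfx
    refine ⟨f e, show ‖φ + f e • ψ‖ ≤ c⁻¹ by rwa [← hf_eq], ?_⟩
    rw [← add_smul_apply_eq_zero_iff hdecomp hφx hφe hψx hψe, ← hf_eq, hfy]
  · rintro ⟨s, hs, hy⟩
    exact ⟨φ + s • ψ, by simp [hφx, hψx],
      (add_smul_apply_eq_zero_iff hdecomp hφx hφe hψx hψe).2 hy, hs⟩

end Biorthogonal

theorem F_eq_cone_union_neg_cone_general {X : Type*} [NormedAddCommGroup X] [NormedSpace ℝ X]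
    (hdim : Module.finrank ℝ X = 2)
    (x : X) (hx : ‖x‖ = 1) (ε : ℝ) (hε0 : 0 ≤ ε) (hε1 : ε < 1) :
    ∃ v₁ v₂ : X, ‖v₁‖ = 1 ∧ ‖v₂‖ = 1 ∧
      ({w : X | ∃ α β : ℝ, 0 ≤ α ∧ 0 ≤ β ∧ w = α • v₁ + β • v₂} ∩
        -{w : X | ∃ α β : ℝ, 0 ≤ α ∧ 0 ≤ β ∧ w = α • v₁ + β • v₂} = {0}) ∧
      {y : X | ∀ l : ℝ, ‖x + l • y‖ ≥ Real.sqrt (1 - ε ^ 2)} =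
        {w : X | ∃ α β : ℝ, 0 ≤ α ∧ 0 ≤ β ∧ w = α • v₁ + β • v₂} ∪
          -{w : X | ∃ α β : ℝ, 0 ≤ α ∧ 0 ≤ β ∧ w = α • v₁ + β • v₂} := by
  set c := √(1 - ε ^ 2)
  have hc : 0 < c := Real.sqrt_pos.2 (by nlinarith)
  have hc1 : c ≤ 1 := Real.sqrt_le_one.2 (by nlinarith)
  obtain ⟨e, φ, ψ, hφx, hφe, hψx, hψe, hdecomp⟩ :=
    exists_biorthogonal_of_finrank_eq_two hdim (norm_ne_zero_iff.1 (hx ▸ one_ne_zero))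
  have hF := fun y ↦ forall_le_norm_add_smul_iff_exists hdecomp hφx hφe hψx hψe hc (y := y)
  -- `0 ∈ F(x, ε)` because `‖x‖ = 1 ≥ c`, so the parameter set below is nonempty.
  obtain ⟨s₀, hs₀, -⟩ := (hF 0).1 fun l ↦ by simpa [hx] using hc1
  obtain ⟨a, b, hI⟩ := exists_setOf_norm_add_smul_le_eq_Icc (p := φ)
    (fun h ↦ by simp [h] at hψe) ⟨s₀, hs₀⟩
  have hab : a ≤ b := nonempty_Icc.1 (hI ▸ ⟨s₀, hs₀⟩)
  have hψ : ∀ s : ℝ, ψ (e - s • x) = 1 := by simp [hψx, hψe]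
  have hne : ∀ s : ℝ, e - s • x ≠ 0 := fun s h ↦ by simpa [h] using hψ s
  refine ⟨NormedSpace.normalize (e - a • x), NormedSpace.normalize (e - b • x),
    NormedSpace.norm_normalize_eq_one_iff.2 (hne a),
    NormedSpace.norm_normalize_eq_one_iff.2 (hne b), ?_⟩
  change pairCone _ _ ∩ -pairCone _ _ = {0} ∧ _ = pairCone _ _ ∪ -pairCone _ _
  rw [NormedSpace.normalize, NormedSpace.normalize,
    pairCone_smul_smul (by simpa using hne a) (by simpa using hne b)]
  refine ⟨pairCone_inter_neg_eq_singleton_zero (φ := (ψ : X →ₗ[ℝ] ℝ)) (by simp [hψ]) (by simp [hψ]),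
    ?_⟩
  ext y
  rw [mem_pairCone_union_neg_iff, segment_sub_smul_eq_image e x hab]
  simp only [mem_ofPred_eq, ge_iff_le, hF, hI, exists_mem_image]

theorem F_eq_cone_union_neg_cone {X : Type*} [NormedAddCommGroup X] [NormedSpace ℝ X]
    [FiniteDimensional ℝ X] (hdim : Module.finrank ℝ X = 2)
    (x : X) (hx : ‖x‖ = 1) (ε : ℝ) (hε0 : 0 ≤ ε) (hε1 : ε < 1) :
    ∃ v₁ v₂ : X, ‖v₁‖ = 1 ∧ ‖v₂‖ = 1 ∧
      ({w : X | ∃ α β : ℝ, 0 ≤ α ∧ 0 ≤ β ∧ w = α • v₁ + β • v₂} ∩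
        -{w : X | ∃ α β : ℝ, 0 ≤ α ∧ 0 ≤ β ∧ w = α • v₁ + β • v₂} = {0}) ∧
      {y : X | ∀ l : ℝ, ‖x + l • y‖ ≥ Real.sqrt (1 - ε ^ 2)} =
        {w : X | ∃ α β : ℝ, 0 ≤ α ∧ 0 ≤ β ∧ w = α • v₁ + β • v₂} ∪
          -{w : X | ∃ α β : ℝ, 0 ≤ α ∧ 0 ≤ β ∧ w = α • v₁ + β • v₂} :=
  F_eq_cone_union_neg_cone_general hdim x hx ε hε0 hε1
end

section
/- Let X be a real normed space, x ∈ X nonzero, ε ∈ [0,1), and u, w ∈ X with x ⊥_D^ε u and x ⊥_D^ε w. If v = αx + βu for some α, β ≥ 0, then for all λ ≥ 0, ‖x + λv‖ ≥ √(1−ε²)‖x‖. -/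
theorem cone_combination_approx_orth {X : Type*} [NormedAddCommGroup X] [NormedSpace ℝ X]
    (x : X) (hx : x ≠ 0) (ε : ℝ) (hε0 : 0 ≤ ε) (hε1 : ε < 1) (u w : X)
    (hu : ∀ l : ℝ, ‖x + l • u‖ ≥ Real.sqrt (1 - ε ^ 2) * ‖x‖)
    (hw : ∀ l : ℝ, ‖x + l • w‖ ≥ Real.sqrt (1 - ε ^ 2) * ‖x‖)
    (v : X) (α β : ℝ) (hα : 0 ≤ α) (hβ : 0 ≤ β) (hv : v = α • x + β • u) :
    ∀ l : ℝ, 0 ≤ l → ‖x + l • v‖ ≥ Real.sqrt (1 - ε ^ 2) * ‖x‖ := by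
  intro l hl
  have h1 : (0:ℝ) < 1 + l * α := by positivity
  have key : x + l • v = (1 + l * α) • (x + (l * β / (1 + l * α)) • u) := by
    have h2 : (1 + l * α) * (l * β / (1 + l * α)) = l * β := mul_div_cancel₀ _ h1.ne'
    rw [hv, smul_add (1 + l * α), smul_smul (1 + l * α), h2]
    module
  rw [key, norm_smul, Real.norm_eq_abs, abs_of_pos h1]
  calc Real.sqrt (1 - ε ^ 2) * ‖x‖ ≤ 1 * ‖x + (l * β / (1 + l * α)) • u‖ := by
        rw [one_mul]; exact hu _
    _ ≤ (1 + l * α) * ‖x + (l * β / (1 + l * α)) • u‖ := by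
        apply mul_le_mul_of_nonneg_right _ (norm_nonneg _)
        nlinarith
end

section
/- Let X be a two-dimensional real Banach space and v₁, v₂ ∈ S_X, and suppose x ∈ S_X satisfies F(x, ε) = K ∪ (−K) with K the normal cone determined by v₁, v₂, as constructed in the paper (so inf_λ ‖x + λv₁‖ = inf_λ ‖x + λv₂‖ = √(1−ε²)). If ε ∈ (0,1) and z ∈ S_X lies in the relative interior of K (i.e., z is a positive multiple of (1−t)v₁ + tv₂ for some t ∈ (0,1) with z not parallel to v₁ or v₂), then inf_{λ∈ℝ} ‖x + λz‖ > √(1−ε²). -/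
/-!
Suppose the infimum for `z` were `r = √(1 - ε²)`. Hahn–Banach in the quotient by `ℝ v` gives, for
each of `v₁`, `v₂`, `z`, a norm-one functional vanishing on it and equal to `r` at `x`; they are
pairwise distinct because `z` is parallel to neither `v₁` nor `v₂` but lies in their span. In the
two-dimensional dual, the functionals equal to `r` at `x` form a line, which also contains `r • g`
for a norming functional `g` of `x`, of norm `r < 1`. But a convex function on a line (here the
dual norm) cannot take the value `1` at three points and a smaller value elsewhere.
-/

open Module

theorem ConvexOn.le_apply_of_eq_at_three {φ : ℝ → ℝ} (hφ : ConvexOn ℝ Set.univ φ) {a b c y : ℝ}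
    (hab : a ≠ b) (hac : a ≠ c) (hbc : b ≠ c) (ha : φ a = y) (hb : φ b = y) (hc : φ c = y)
    (s : ℝ) : y ≤ φ s := by
  by_contra! hs
  have same_side : ∀ p q, p ≠ q → φ p = y → φ q = y → 0 < (p - s) * (q - s) → False := by
    intro p q hpq hp hq hpos
    wlog hlt : p < q generalizing p q
    · exact this q p hpq.symm hq hp (by linarith) (lt_of_le_of_ne (not_lt.1 hlt) hpq.symm)
    rcases lt_or_ge s p with hsp | hps
    · have := hφ.lt_right_of_left_lt trivial trivial (Ioo_subset_openSegment ⟨hsp, hlt⟩)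
        (by rwa [hp])
      linarith
    · have hqs : q < s := by nlinarith
      have := hφ.lt_left_of_right_lt trivial trivial (Ioo_subset_openSegment ⟨hlt, hqs⟩)
        (by rwa [hq])
      linarith
  have hsa : a - s ≠ 0 := sub_ne_zero.2 fun h => by rw [h] at ha; linarith
  have hsb : b - s ≠ 0 := sub_ne_zero.2 fun h => by rw [h] at hb; linarith
  have hsc : c - s ≠ 0 := sub_ne_zero.2 fun h => by rw [h] at hc; linarith
  -- two of the three points lie on the same side of `s`
  have : 0 < (a - s) * (b - s) ∨ 0 < (a - s) * (c - s) ∨ 0 < (b - s) * (c - s) := by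
    by_contra! h
    obtain ⟨h₁, h₂, h₃⟩ := h
    have : 0 < ((a - s) * (b - s) * (c - s)) ^ 2 := by positivity
    nlinarith [mul_nonneg (neg_nonneg.2 h₁) (neg_nonneg.2 h₂), mul_nonpos_iff.1 h₃]
  rcases this with h | h | h
  exacts [same_side a b hab ha hb h, same_side a c hac ha hc h, same_side b c hbc hb hc h]

theorem norm_mkQ_span_singleton {E : Type*} [SeminormedAddCommGroup E] [NormedSpace ℝ E]
    (x y : E) : ‖(ℝ ∙ y).mkQ x‖ = ⨅ l : ℝ, ‖x + l • y‖ := by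
  apply le_antisymm
  · refine le_ciInf fun l => ?_
    calc ‖(ℝ ∙ y).mkQ x‖ = ‖(ℝ ∙ y).mkQ (x + l • y)‖ := by
          have hy : y ∈ LinearMap.ker (ℝ ∙ y).mkQ := by
            rw [Submodule.ker_mkQ]; exact Submodule.mem_span_singleton_self y
          rw [map_add, map_smul, LinearMap.mem_ker.1 hy, smul_zero, add_zero]
      _ ≤ ‖x + l • y‖ := Submodule.Quotient.norm_mk_le _ _
  · refine QuotientAddGroup.le_norm_iff.2 fun m hm => ?_
    obtain ⟨l, hl⟩ := Submodule.mem_span_singleton.1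
      ((Submodule.Quotient.eq (ℝ ∙ y)).1 hm)
    exact ciInf_le_of_le ⟨0, Set.forall_mem_range.2 fun _ => norm_nonneg _⟩ l
      (by rw [hl]; simp)

theorem exists_dual_apply_eq_iInf_norm_add_smul {E : Type*} [SeminormedAddCommGroup E]
    [NormedSpace ℝ E] (x y : E) (h : 0 < ⨅ l : ℝ, ‖x + l • y‖) :
    ∃ f : StrongDual ℝ E, ‖f‖ = 1 ∧ f y = 0 ∧ f x = ⨅ l : ℝ, ‖x + l • y‖ := by
  set r := ⨅ l : ℝ, ‖x + l • y‖
  obtain ⟨g, hg, hgx⟩ := exists_dual_vector ℝ ((ℝ ∙ y).mkQ x)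
    (by rw [norm_mkQ_span_singleton]; exact h.ne')
  set f := g.comp (ℝ ∙ y).mkQL
  have hfy : f y = 0 := by
    simp [f, (Submodule.Quotient.mk_eq_zero _).2 (Submodule.mem_span_singleton_self y)]
  have hfx : f x = r := by
    change g ((ℝ ∙ y).mkQ x) = r
    rw [hgx, norm_mkQ_span_singleton]; rfl
  refine ⟨f, le_antisymm ?_ ?_, hfy, hfx⟩
  · refine f.opNorm_le_bound zero_le_one fun w => ?_
    calc ‖f w‖ ≤ ‖g‖ * ‖(ℝ ∙ y).mkQ w‖ := g.le_opNorm _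
      _ ≤ 1 * ‖w‖ := by rw [hg]; gcongr; exact Submodule.Quotient.norm_mk_le _ _
  · have hline : ∀ l : ℝ, r ≤ ‖f‖ * ‖x + l • y‖ := fun l => by
      have hfl : f (x + l • y) = r := by simp [hfx, hfy]
      simpa [hfl, abs_of_pos h] using f.le_opNorm (x + l • y)
    have : r ≤ ‖f‖ * r := by
      rw [Real.mul_iInf_of_nonneg (norm_nonneg f)]; exact le_ciInf hline
    nlinarith

theorem ContinuousLinearMap.ext_of_linearIndependent_pair {K X M : Type*} [DivisionRing K]
    [AddCommGroup X] [Module K X] [TopologicalSpace X] [AddCommGroup M] [Module K M]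
    [TopologicalSpace M] (hX : finrank K X = 2) {u v : X} (huv : LinearIndependent K ![u, v])
    {f g : X →L[K] M} (hu : f u = g u) (hv : f v = g v) : f = g := by
  have hspan := huv.span_eq_top_of_card_eq_finrank (by simp [hX])
  exact ContinuousLinearMap.coe_injective <|
    LinearMap.ext_on_range hspan (Fin.forall_fin_two.2 ⟨hu, hv⟩)

theorem ContinuousLinearMap.exists_eq_add_smul_sub_of_apply_eq {𝕜 X : Type*} [NormedField 𝕜]
    [AddCommGroup X] [Module 𝕜 X] [TopologicalSpace X] (hX : finrank 𝕜 X = 2) {x : X}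
    (hx : x ≠ 0) {f g φ : X →L[𝕜] 𝕜} (hfg : f ≠ g) (hg : g x = f x) (hφ : φ x = f x) :
    ∃ s : 𝕜, φ = f + s • (g - f) := by
  obtain ⟨w, hw⟩ := DFunLike.ne_iff.1 hfg.symm
  have hd : (g - f) w ≠ 0 := by simpa [sub_eq_zero] using hw
  have hxw : LinearIndependent 𝕜 ![x, w] := (LinearIndependent.pair_iff' hx).2 fun a ha => by
    apply hd; rw [← ha]; simp [hg]
  refine ⟨(φ - f) w / (g - f) w, ext_of_linearIndependent_pair hX hxw ?_ ?_⟩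
  · simp [hg, hφ]
  · simp only [add_apply, smul_apply, smul_eq_mul]
    rw [div_mul_cancel₀ _ hd, sub_apply, add_sub_cancel]

theorem ContinuousLinearMap.apply_ne_zero_of_ne_smul {K X M : Type*} [DivisionRing K]
    [AddCommGroup X] [Module K X] [TopologicalSpace X] [AddCommGroup M] [Module K M]
    [TopologicalSpace M] (hX : finrank K X = 2) {v w : X} (hv : v ≠ 0) (hw : ∀ a : K, w ≠ a • v)
    {f : X →L[K] M} (hf : f ≠ 0) (hfv : f v = 0) : f w ≠ 0 := fun hfw =>
  hf <| ext_of_linearIndependent_pair hX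
    ((LinearIndependent.pair_iff' hv).2 fun a ha => hw a ha.symm) (g := 0) hfv hfw

theorem convexOn_norm_add_smul {E : Type*} [SeminormedAddCommGroup E] [NormedSpace ℝ E]
    (p d : E) : ConvexOn ℝ Set.univ fun s : ℝ => ‖p + s • d‖ := by
  exact (convexOn_univ_norm.translate_right p).comp_linearMap (LinearMap.toSpanSingleton ℝ E d)

theorem ContinuousLinearMap.one_le_norm_of_three_norm_eq_one {X : Type*}
    [SeminormedAddCommGroup X] [NormedSpace ℝ X] (hX : finrank ℝ X = 2) {x : X} (hx : x ≠ 0)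
    {f₁ f₂ f₃ φ : StrongDual ℝ X} (h₁₂ : f₁ ≠ f₂) (h₁₃ : f₁ ≠ f₃) (h₂₃ : f₂ ≠ f₃)
    (hn₁ : ‖f₁‖ = 1) (hn₂ : ‖f₂‖ = 1) (hn₃ : ‖f₃‖ = 1)
    (h₂ : f₂ x = f₁ x) (h₃ : f₃ x = f₁ x) (hφ : φ x = f₁ x) : 1 ≤ ‖φ‖ := by
  obtain ⟨σ, hσ⟩ := exists_eq_add_smul_sub_of_apply_eq hX hx h₁₂ h₂ h₃
  obtain ⟨s, rfl⟩ := exists_eq_add_smul_sub_of_apply_eq hX hx h₁₂ h₂ hφ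
  have hσ0 : 0 ≠ σ := fun h => h₁₃ (by rw [hσ, ← h, zero_smul, add_zero])
  have hσ1 : 1 ≠ σ := fun h => h₂₃ (by rw [hσ, ← h, one_smul, add_sub_cancel])
  exact (convexOn_norm_add_smul f₁ (f₂ - f₁)).le_apply_of_eq_at_three zero_ne_one hσ0 hσ1
    (by simpa using hn₁) (by simpa using hn₂) (by rw [← hσ, hn₃]) s

theorem interior_cone_strict_inequality_general {X : Type*} [NormedAddCommGroup X] [NormedSpace ℝ X]
    [FiniteDimensional ℝ X] (hdim : Module.finrank ℝ X = 2)
    (x v₁ v₂ : X) (hx : ‖x‖ = 1) (hv₁ : ‖v₁‖ = 1) (hv₂ : ‖v₂‖ = 1)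
    (ε : ℝ) (hε0 : 0 < ε) (hε1 : ε < 1)
    (hF : {y : X | ∀ l : ℝ, ‖x + l • y‖ ≥ Real.sqrt (1 - ε ^ 2)} =
        {w : X | ∃ α β : ℝ, 0 ≤ α ∧ 0 ≤ β ∧ w = α • v₁ + β • v₂} ∪
          -{w : X | ∃ α β : ℝ, 0 ≤ α ∧ 0 ≤ β ∧ w = α • v₁ + β • v₂})
    (hinf₁ : (⨅ l : ℝ, ‖x + l • v₁‖) = Real.sqrt (1 - ε ^ 2))
    (hinf₂ : (⨅ l : ℝ, ‖x + l • v₂‖) = Real.sqrt (1 - ε ^ 2))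
    (z : X)
    (hzK : ∃ c t : ℝ, 0 < c ∧ 0 < t ∧ t < 1 ∧ z = c • ((1 - t) • v₁ + t • v₂))
    (hz₁ : ∀ a : ℝ, z ≠ a • v₁) (hz₂ : ∀ a : ℝ, z ≠ a • v₂) :
    (⨅ l : ℝ, ‖x + l • z‖) > Real.sqrt (1 - ε ^ 2) := by
  obtain ⟨c, t, hc, ht0, ht1, hz⟩ := hzK
  set r := Real.sqrt (1 - ε ^ 2)
  have hr0 : 0 < r := Real.sqrt_pos.2 (by nlinarith)
  have hr1 : r < 1 := (Real.sqrt_lt' one_pos).2 (by nlinarith)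
  have hzF : z ∈ {y : X | ∀ l : ℝ, ‖x + l • y‖ ≥ r} :=
    hF ▸ Or.inl ⟨c * (1 - t), c * t, by nlinarith, by positivity, by rw [hz]; module⟩
  refine lt_of_le_of_ne (le_ciInf hzF) fun hinf => ?_
  obtain ⟨f₁, hn₁, hf₁v, hf₁x⟩ := exists_dual_apply_eq_iInf_norm_add_smul x v₁ (hinf₁ ▸ hr0)
  obtain ⟨f₂, hn₂, hf₂v, hf₂x⟩ := exists_dual_apply_eq_iInf_norm_add_smul x v₂ (hinf₂ ▸ hr0)
  obtain ⟨fz, hnz, hfzz, hfzx⟩ := exists_dual_apply_eq_iInf_norm_add_smul x z (hinf ▸ hr0)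
  have hf₁z : f₁ z ≠ 0 := ContinuousLinearMap.apply_ne_zero_of_ne_smul hdim
    (norm_ne_zero_iff.1 (by simp [hv₁])) hz₁ (norm_ne_zero_iff.1 (by simp [hn₁])) hf₁v
  have hf₂z : f₂ z ≠ 0 := ContinuousLinearMap.apply_ne_zero_of_ne_smul hdim
    (norm_ne_zero_iff.1 (by simp [hv₂])) hz₂ (norm_ne_zero_iff.1 (by simp [hn₂])) hf₂v
  have hf₁₂ : f₁ ≠ f₂ := fun h => hf₁z (by rw [hz]; simp [hf₁v, h ▸ hf₂v])
  have hx0 : x ≠ 0 := norm_ne_zero_iff.1 (by simp [hx])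
  -- `r • g` takes the common value `r` at `x` but has norm `r < 1`
  obtain ⟨g, hg, hgx⟩ := exists_dual_vector ℝ x (norm_ne_zero_iff.2 hx0)
  have := ContinuousLinearMap.one_le_norm_of_three_norm_eq_one hdim hx0 hf₁₂
    (fun h => hf₁z (h ▸ hfzz)) (fun h => hf₂z (h ▸ hfzz)) hn₁ hn₂ hnz (φ := r • g)
    (by rw [hf₂x, hf₁x, hinf₁, hinf₂]) (by rw [hfzx, hf₁x, hinf₁, hinf])
    (by simp [hgx, hx, hf₁x, hinf₁])
  rw [norm_smul, hg, Real.norm_of_nonneg hr0.le, mul_one] at this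
  linarith

theorem interior_cone_strict_inequality {X : Type*} [NormedAddCommGroup X] [NormedSpace ℝ X]
    [FiniteDimensional ℝ X] (hdim : Module.finrank ℝ X = 2)
    (x v₁ v₂ : X) (hx : ‖x‖ = 1) (hv₁ : ‖v₁‖ = 1) (hv₂ : ‖v₂‖ = 1)
    (ε : ℝ) (hε0 : 0 < ε) (hε1 : ε < 1)
    (hF : {y : X | ∀ l : ℝ, ‖x + l • y‖ ≥ Real.sqrt (1 - ε ^ 2)} =
        {w : X | ∃ α β : ℝ, 0 ≤ α ∧ 0 ≤ β ∧ w = α • v₁ + β • v₂} ∪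
          -{w : X | ∃ α β : ℝ, 0 ≤ α ∧ 0 ≤ β ∧ w = α • v₁ + β • v₂})
    (hinf₁ : (⨅ l : ℝ, ‖x + l • v₁‖) = Real.sqrt (1 - ε ^ 2))
    (hinf₂ : (⨅ l : ℝ, ‖x + l • v₂‖) = Real.sqrt (1 - ε ^ 2))
    (z : X) (hz : ‖z‖ = 1)
    (hzK : ∃ c t : ℝ, 0 < c ∧ 0 < t ∧ t < 1 ∧ z = c • ((1 - t) • v₁ + t • v₂))
    (hz₁ : ∀ a : ℝ, z ≠ a • v₁) (hz₂ : ∀ a : ℝ, z ≠ a • v₂) :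
    (⨅ l : ℝ, ‖x + l • z‖) > Real.sqrt (1 - ε ^ 2) :=
  interior_cone_strict_inequality_general hdim x v₁ v₂ hx hv₁ hv₂ ε hε0 hε1 hF hinf₁ hinf₂ z hzK hz₁
    hz₂
end

section
/- Let X be a two-dimensional real smooth Banach space and let K be a normal cone in X determined by v₁, v₂ ∈ S_X. Then there exist x ∈ S_X and ε ∈ [0,1) such that F(x, ε) = K ∪ (−K). -/
open Metric

section helpers
variable {X : Type*} [NormedAddCommGroup X] [NormedSpace ℝ X]

lemma clm_norm_smul (c : ℝ) (f : X →L[ℝ] ℝ) : ‖c • f‖ = |c| * ‖f‖ := by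
  rw [show |c| = ‖c‖ from rfl]; exact norm_smul c f

/-- Norm attainment for functionals on a finite-dimensional space. -/
lemma my_attain [FiniteDimensional ℝ X] [Nontrivial X] (f : X →L[ℝ] ℝ) :
    ∃ u : X, ‖u‖ = 1 ∧ f u = ‖f‖ := by
  obtain ⟨u, hu, hmax⟩ := (isCompact_sphere (0:X) 1).exists_isMaxOn
    (NormedSpace.sphere_nonempty.2 zero_le_one) (f.continuous.continuousOn)
  rw [mem_sphere_zero_iff_norm] at hu
  have hmax' : ∀ w : X, ‖w‖ = 1 → f w ≤ f u := fun w hw =>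
    hmax (mem_sphere_zero_iff_norm.2 hw)
  have h0 : 0 ≤ f u := by
    have h1 := hmax' u hu
    have h2 := hmax' (-u) (by simpa using hu)
    rw [map_neg] at h2; linarith
  have hle : ‖f‖ ≤ f u := by
    apply ContinuousLinearMap.opNorm_le_bound _ h0
    intro w
    rcases eq_or_ne w 0 with rfl | hw
    · simp
    · have hnw : 0 < ‖w‖ := norm_pos_iff.2 hw
      have hw1 : ‖(‖w‖⁻¹ • w)‖ = 1 := by
        rw [norm_smul, norm_inv, norm_norm, inv_mul_cancel₀ hnw.ne']
      have h1 := hmax' _ hw1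
      have h2 := hmax' _ (by simpa using hw1 : ‖(-(‖w‖⁻¹ • w))‖ = 1)
      rw [map_smul, smul_eq_mul] at h1
      rw [map_neg, map_smul, smul_eq_mul] at h2
      rw [Real.norm_eq_abs, abs_le]
      constructor
      · have h3 : -(f w) ≤ ‖w‖ * f u := by
          have := mul_le_mul_of_nonneg_left h2 hnw.le
          rwa [mul_neg, ← mul_assoc, mul_inv_cancel₀ hnw.ne', one_mul] at this
        nlinarith
      · have h3 : f w ≤ ‖w‖ * f u := by
          have := mul_le_mul_of_nonneg_left h1 hnw.le
          rwa [← mul_assoc, mul_inv_cancel₀ hnw.ne', one_mul] at this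
        nlinarith
  have hge : f u ≤ ‖f‖ := by
    calc f u ≤ ‖f u‖ := le_abs_self _
    _ ≤ ‖f‖ * ‖u‖ := f.le_opNorm u
    _ = ‖f‖ := by rw [hu, mul_one]
  exact ⟨u, hu, le_antisymm hge hle⟩

/-- Strict convexity of the dual of a smooth space. -/
lemma my_sconv [FiniteDimensional ℝ X] [Nontrivial X]
    (hsmooth : ∀ z : X, z ≠ 0 → ∃! f : X →L[ℝ] ℝ, ‖f‖ = 1 ∧ f z = ‖z‖)
    (a b : X →L[ℝ] ℝ) (ha : ‖a‖ = 1) (hb : ‖b‖ = 1) (hab : a ≠ b) : ‖a + b‖ < 2 := by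
  have h2 : ‖a + b‖ ≤ 2 := by
    calc ‖a + b‖ ≤ ‖a‖ + ‖b‖ := norm_add_le a b
    _ = 2 := by rw [ha, hb]; norm_num
  refine lt_of_le_of_ne h2 ?_
  intro heq
  obtain ⟨u, hu1, hu2⟩ := my_attain (a + b)
  rw [heq] at hu2
  have hau : a u ≤ 1 := by
    calc a u ≤ ‖a u‖ := le_abs_self _
    _ ≤ ‖a‖ * ‖u‖ := a.le_opNorm u
    _ = 1 := by rw [ha, hu1, mul_one]
  have hbu : b u ≤ 1 := by
    calc b u ≤ ‖b u‖ := le_abs_self _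
    _ ≤ ‖b‖ * ‖u‖ := b.le_opNorm u
    _ = 1 := by rw [hb, hu1, mul_one]
  have hsum : a u + b u = 2 := by simpa using hu2
  have hau1 : a u = 1 := by linarith
  have hbu1 : b u = 1 := by linarith
  have hune : u ≠ 0 := by intro h; rw [h] at hu1; simp at hu1
  obtain ⟨g, -, hg⟩ := hsmooth u hune
  have h1 : a = g := hg a ⟨ha, by rw [hau1, hu1]⟩
  have h2 : b = g := hg b ⟨hb, by rw [hbu1, hu1]⟩
  exact hab (h1.trans h2.symm)

/-- Moving off a unit functional in direction φ+χ strictly increases norm. -/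
lemma my_lemL [FiniteDimensional ℝ X] [Nontrivial X]
    (hsmooth : ∀ z : X, z ≠ 0 → ∃! f : X →L[ℝ] ℝ, ‖f‖ = 1 ∧ f z = ‖z‖)
    (φ χ : X →L[ℝ] ℝ) (hφ : ‖φ‖ = 1) (hχ : ‖χ‖ = 1) (hne : φ + χ ≠ 0)
    {r : ℝ} (hr : 0 < r) : 1 < ‖φ + r • (φ + χ)‖ := by
  have lb : ∀ ρ : ℝ, 0 ≤ ρ → 1 ≤ ‖φ + ρ • (φ + χ)‖ := by
    intro ρ hρ
    obtain ⟨u, hu, hfu⟩ := my_attain φ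
    rw [hφ] at hfu
    have hχu : -1 ≤ χ u := by
      have h1 : ‖χ u‖ ≤ ‖χ‖ * ‖u‖ := χ.le_opNorm u
      rw [hχ, hu, Real.norm_eq_abs] at h1
      have := abs_le.1 (by linarith : |χ u| ≤ 1)
      linarith [this.1]
    have heval : (φ + ρ • (φ + χ)) u = 1 + ρ * (1 + χ u) := by
      simp [hfu]; ring
    calc (1:ℝ) ≤ 1 + ρ * (1 + χ u) := by nlinarith
    _ = (φ + ρ • (φ + χ)) u := heval.symm
    _ ≤ ‖(φ + ρ • (φ + χ)) u‖ := le_abs_self _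
    _ ≤ ‖φ + ρ • (φ + χ)‖ * ‖u‖ := (φ + ρ • (φ + χ)).le_opNorm u
    _ = ‖φ + ρ • (φ + χ)‖ := by rw [hu, mul_one]
  by_contra hcon
  push_neg at hcon
  have heq : ‖φ + r • (φ + χ)‖ = 1 := le_antisymm hcon (lb r hr.le)
  have hne2 : φ ≠ φ + r • (φ + χ) := by
    intro h
    apply hne
    have h0 : r • (φ + χ) = 0 := by
      have := h.symm
      rwa [add_eq_left] at this
    rcases smul_eq_zero.1 h0 with h' | h'
    · exact absurd h' hr.ne'
    · exact h'
  have hlt := my_sconv hsmooth φ (φ + r • (φ + χ)) hφ heq hne2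
  have hmid : φ + (φ + r • (φ + χ)) = (2:ℝ) • (φ + (r/2) • (φ + χ)) := by
    module
  rw [hmid, clm_norm_smul] at hlt
  have := lb (r/2) (by linarith)
  rw [show |(2:ℝ)| = 2 by norm_num] at hlt
  linarith

/-- Key norm inequality. -/
lemma my_key [FiniteDimensional ℝ X] [Nontrivial X]
    (hsmooth : ∀ z : X, z ≠ 0 → ∃! f : X →L[ℝ] ℝ, ‖f‖ = 1 ∧ f z = ‖z‖)
    (φ χ : X →L[ℝ] ℝ) (hφ : ‖φ‖ = 1) (hχ : ‖χ‖ = 1) (hne : φ + χ ≠ 0)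
    {s t : ℝ} (ht : 0 < t) (hts : t < s) : s - t < ‖s • φ + t • χ‖ := by
  have hst : s - t ≠ 0 := by linarith
  have hr : 0 < t / (s - t) := div_pos ht (by linarith)
  have hrepr : s • φ + t • χ = (s - t) • (φ + (t / (s - t)) • (φ + χ)) := by
    rw [smul_add, smul_smul]
    have h1 : (s - t) * (t / (s - t)) = t := by field_simp
    rw [h1]; module
  rw [hrepr, clm_norm_smul, abs_of_pos (by linarith : (0:ℝ) < s - t)]
  have := my_lemL hsmooth φ χ hφ hχ hne hr
  nlinarith

/-- Separation lemma: from the norm condition extract a dual functional. -/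
lemma my_sep {δ : ℝ} (hδ : 0 < δ) (x y : X) (h : ∀ l : ℝ, δ ≤ ‖x + l • y‖) :
    ∃ g : X →L[ℝ] ℝ, ‖g‖ ≤ 1 ∧ g y = 0 ∧ δ ≤ g x := by
  set T : Set X := {p | ∃ l : ℝ, p = x + l • y} with hT
  have hdisj : Disjoint (ball (0:X) δ) T := by
    rw [Set.disjoint_left]
    rintro p hp ⟨l, rfl⟩
    rw [mem_ball, dist_zero_right] at hp
    exact absurd (h l) (not_le.2 hp)
  have hconv : Convex ℝ T := by
    rintro p ⟨l₁, rfl⟩ q ⟨l₂, rfl⟩ a b ha hb hab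
    refine ⟨a * l₁ + b * l₂, ?_⟩
    have heq : a • (x + l₁ • y) + b • (x + l₂ • y)
        = (a + b) • x + (a * l₁ + b * l₂) • y := by module
    rw [heq, hab, one_smul]
  obtain ⟨f, u, hfs, hft⟩ :=
    geometric_hahn_banach_open (convex_ball 0 δ) isOpen_ball hconv hdisj
  have hu0 : 0 < u := by
    have := hfs 0 (by simp [hδ])
    simpa using this
  have hfx : u ≤ f x := hft x ⟨0, by simp⟩
  have hfy : f y = 0 := by
    by_contra hfy
    have h1 := hft (x + ((u - 1 - f x) / f y) • y) ⟨_, rfl⟩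
    rw [map_add, map_smul, smul_eq_mul, div_mul_cancel₀ _ hfy] at h1
    linarith
  -- f ≤ u on the closed ball
  have hcb : ∀ w : X, ‖w‖ ≤ δ → f w ≤ u := by
    intro w hw
    have hsub : closedBall (0:X) δ ⊆ {a | f a ≤ u} := by
      rw [← closure_ball (0:X) hδ.ne']
      exact closure_minimal (fun a ha => (hfs a ha).le)
        (isClosed_le f.continuous continuous_const)
    exact hsub (by rwa [mem_closedBall, dist_zero_right])
  have hnorm : ‖f‖ ≤ u / δ := by
    apply ContinuousLinearMap.opNorm_le_bound _ (by positivity)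
    intro w
    rcases eq_or_ne w 0 with rfl | hw
    · simp
    · have hnw : 0 < ‖w‖ := norm_pos_iff.2 hw
      have hw1 : ‖(δ / ‖w‖) • w‖ ≤ δ := by
        rw [norm_smul, Real.norm_eq_abs, abs_of_pos (by positivity),
          div_mul_cancel₀ _ hnw.ne']
      have h1 := hcb _ hw1
      have h2 := hcb _ (by rwa [norm_neg] : ‖(-((δ / ‖w‖) • w))‖ ≤ δ)
      rw [map_smul, smul_eq_mul] at h1
      rw [map_neg, map_smul, smul_eq_mul] at h2
      have e1 : δ / ‖w‖ * f w * ‖w‖ = δ * f w := by field_simp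
      have h1' : δ * f w ≤ u * ‖w‖ := by
        rw [← e1]; exact mul_le_mul_of_nonneg_right h1 hnw.le
      have h2' : -(δ * f w) ≤ u * ‖w‖ := by
        rw [← e1, ← neg_mul]; exact mul_le_mul_of_nonneg_right h2 hnw.le
      rw [Real.norm_eq_abs, div_mul_eq_mul_div, le_div_iff₀ hδ]
      rcases abs_cases (f w) with ⟨he, -⟩ | ⟨he, -⟩ <;> rw [he] <;> nlinarith
  have hfne : 0 < ‖f‖ := by
    rw [norm_pos_iff]
    intro h0
    rw [h0] at hfx
    simp at hfx
    linarith
  refine ⟨‖f‖⁻¹ • f, ?_, ?_, ?_⟩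
  · rw [clm_norm_smul, abs_of_pos (by positivity), inv_mul_cancel₀ hfne.ne']
  · rw [ContinuousLinearMap.smul_apply, hfy, smul_zero]
  · rw [ContinuousLinearMap.smul_apply, smul_eq_mul]
    have h1 : δ * ‖f‖ ≤ u := by
      rw [le_div_iff₀ hδ] at hnorm; nlinarith
    rw [le_inv_mul_iff₀ hfne]
    calc ‖f‖ * δ = δ * ‖f‖ := mul_comm _ _
    _ ≤ u := h1
    _ ≤ f x := hfx

end helpers


open Metric

section basis_helpers
variable {X : Type*} [NormedAddCommGroup X] [NormedSpace ℝ X]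

lemma clm_norm_smul' (c : ℝ) (f : X →L[ℝ] ℝ) : ‖c • f‖ = |c| * ‖f‖ := by
  rw [show |c| = ‖c‖ from rfl]; exact norm_smul c f

lemma my_repr [FiniteDimensional ℝ X] (hdim : Module.finrank ℝ X = 2) {u w : X}
    (h : ∀ a b : ℝ, a • u + b • w = 0 → a = 0 ∧ b = 0) (y : X) :
    ∃ c d : ℝ, y = c • u + d • w := by
  have li : LinearIndependent ℝ ![u, w] := LinearIndependent.pair_iff.2 h
  let b := basisOfLinearIndependentOfCardEqFinrank li (by simp [hdim])
  have hb : ⇑b = ![u, w] := coe_basisOfLinearIndependentOfCardEqFinrank li _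
  refine ⟨b.repr y 0, b.repr y 1, ?_⟩
  have hs := b.sum_repr y
  rw [Fin.sum_univ_two] at hs
  conv_lhs => rw [← hs]
  simp [hb]

lemma my_dual [FiniteDimensional ℝ X] (hdim : Module.finrank ℝ X = 2) {u w : X}
    (h : ∀ a b : ℝ, a • u + b • w = 0 → a = 0 ∧ b = 0) :
    ∃ φ : X →L[ℝ] ℝ, ‖φ‖ = 1 ∧ φ u = 0 ∧ 0 < φ w := by
  have li : LinearIndependent ℝ ![u, w] := LinearIndependent.pair_iff.2 h
  let b := basisOfLinearIndependentOfCardEqFinrank li (by simp [hdim])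
  have hb : ⇑b = ![u, w] := coe_basisOfLinearIndependentOfCardEqFinrank li _
  have hb0 : b 0 = u := by rw [hb]; simp
  have hb1 : b 1 = w := by rw [hb]; simp
  set ℓ : X →L[ℝ] ℝ := LinearMap.toContinuousLinearMap (b.coord 1) with hℓdef
  have hcoe : ∀ v : X, ℓ v = b.coord 1 v := fun v => rfl
  have hℓu : ℓ u = 0 := by
    rw [hcoe, ← hb0, Module.Basis.coord_apply, Module.Basis.repr_self]; simp
  have hℓw : ℓ w = 1 := by
    rw [hcoe, ← hb1, Module.Basis.coord_apply, Module.Basis.repr_self]; simp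
  have hℓ0 : 0 < ‖ℓ‖ := by
    rw [norm_pos_iff]; intro h0; rw [h0] at hℓw; simp at hℓw
  refine ⟨‖ℓ‖⁻¹ • ℓ, ?_, ?_, ?_⟩
  · rw [clm_norm_smul', abs_of_pos (by positivity), inv_mul_cancel₀ hℓ0.ne']
  · rw [ContinuousLinearMap.smul_apply, hℓu, smul_zero]
  · rw [ContinuousLinearMap.smul_apply, hℓw, smul_eq_mul, mul_one]; positivity

lemma my_ext {u w : X} (hrep : ∀ y : X, ∃ c d : ℝ, y = c • u + d • w)
    (g h' : X →L[ℝ] ℝ) (h1 : g u = h' u) (h2 : g w = h' w) : g = h' := by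
  ext y
  obtain ⟨c, d, rfl⟩ := hrep y
  simp only [map_add, map_smul, h1, h2]

lemma my_not_span [FiniteDimensional ℝ X] (hdim : Module.finrank ℝ X = 2) {v : X}
    (hv : v ≠ 0) : ∃ u : X, u ∉ (Submodule.span ℝ {v}) := by
  by_contra hc
  push_neg at hc
  have htop : (Submodule.span ℝ {v}) = ⊤ := Submodule.eq_top_iff'.2 hc
  have h1 := finrank_span_singleton (K := ℝ) hv
  rw [htop, finrank_top, hdim] at h1
  norm_num at h1
end basis_helpers

set_option maxHeartbeats 4000000 in
theorem cone_is_F_of_smooth {X : Type*} [NormedAddCommGroup X] [NormedSpace ℝ X]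
    [FiniteDimensional ℝ X] (hdim : Module.finrank ℝ X = 2)
    (hsmooth : ∀ z : X, z ≠ 0 → ∃! f : X →L[ℝ] ℝ, ‖f‖ = 1 ∧ f z = ‖z‖)
    (v₁ v₂ : X) (hv₁ : ‖v₁‖ = 1) (hv₂ : ‖v₂‖ = 1) (hne : v₁ ≠ -v₂) :
    ∃ x : X, ∃ ε : ℝ, ‖x‖ = 1 ∧ 0 ≤ ε ∧ ε < 1 ∧
      {y : X | ∀ l : ℝ, ‖x + l • y‖ ≥ Real.sqrt (1 - ε ^ 2)} =
        {w : X | ∃ α β : ℝ, 0 ≤ α ∧ 0 ≤ β ∧ w = α • v₁ + β • v₂} ∪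
          -{w : X | ∃ α β : ℝ, 0 ≤ α ∧ 0 ≤ β ∧ w = α • v₁ + β • v₂} := by
  have hv₁0 : v₁ ≠ 0 := by intro h; rw [h] at hv₁; simp at hv₁
  haveI : Nontrivial X := nontrivial_of_ne v₁ 0 hv₁0
  by_cases hdep : ∃ c : ℝ, v₂ = c • v₁
  · -- degenerate case : v₂ = v₁
    obtain ⟨c, hc⟩ := hdep
    have habs : |c| = 1 := by
      have h1 : ‖v₂‖ = |c| * ‖v₁‖ := by rw [hc, norm_smul, Real.norm_eq_abs]
      rw [hv₁, hv₂, mul_one] at h1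
      exact h1.symm
    have hveq : v₂ = v₁ := by
      rcases abs_eq (zero_le_one) |>.1 habs with h | h
      · rw [hc, h, one_smul]
      · exfalso; apply hne; rw [hc, h]; simp
    simp only [hveq]
    clear hne hv₂ hc habs hveq
    obtain ⟨u, hu⟩ := my_not_span hdim hv₁0
    have hind : ∀ a b : ℝ, a • v₁ + b • u = 0 → a = 0 ∧ b = 0 := by
      intro a b hab
      by_cases hb : b = 0
      · subst hb
        rw [zero_smul, add_zero] at hab
        rcases smul_eq_zero.1 hab with h | h
        · exact ⟨h, rfl⟩
        · exact absurd h hv₁0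
      · exfalso
        apply hu
        have h1 : b • u = -(a • v₁) := by
          rw [add_comm] at hab
          exact add_eq_zero_iff_eq_neg.1 hab
        have h2 : u = (-(b⁻¹ * a)) • v₁ := by
          calc u = (b⁻¹ * b) • u := by rw [inv_mul_cancel₀ hb, one_smul]
          _ = b⁻¹ • (b • u) := by rw [mul_smul]
          _ = b⁻¹ • (-(a • v₁)) := by rw [h1]
          _ = (-(b⁻¹ * a)) • v₁ := by rw [smul_neg, smul_smul, neg_smul]
        rw [h2]
        exact Submodule.smul_mem _ _ (Submodule.mem_span_singleton_self v₁)
    obtain ⟨φ, hφn, hφv, hφu⟩ := my_dual hdim hind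
    obtain ⟨x, hx1, hx2⟩ := my_attain φ
    rw [hφn] at hx2
    have hx0 : x ≠ 0 := by intro h; rw [h] at hx1; simp at hx1
    refine ⟨x, 0, hx1, le_refl 0, by norm_num, ?_⟩
    have hone : Real.sqrt (1 - (0:ℝ) ^ 2) = 1 := by
      rw [show (1:ℝ) - 0 ^ 2 = 1 by ring, Real.sqrt_one]
    simp only [hone]
    ext y
    simp only [Set.mem_setOf_eq, Set.mem_union, Set.mem_neg, ge_iff_le]
    constructor
    · intro hy
      obtain ⟨g, hg1, hg2, hg3⟩ := my_sep one_pos x y hy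
      have hgxle : g x ≤ 1 := by
        calc g x ≤ ‖g x‖ := le_abs_self _
        _ ≤ ‖g‖ * ‖x‖ := g.le_opNorm x
        _ ≤ 1 := by rw [hx1, mul_one]; exact hg1
      have hgx : g x = 1 := le_antisymm hgxle hg3
      have hgn : ‖g‖ = 1 := by
        refine le_antisymm hg1 ?_
        calc (1:ℝ) = g x := hgx.symm
        _ ≤ ‖g x‖ := le_abs_self _
        _ ≤ ‖g‖ * ‖x‖ := g.le_opNorm x
        _ = ‖g‖ := by rw [hx1, mul_one]
      obtain ⟨F, -, hF⟩ := hsmooth x hx0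
      have e1 : g = F := hF g ⟨hgn, by rw [hgx, hx1]⟩
      have e2 : φ = F := hF φ ⟨hφn, by rw [hx2, hx1]⟩
      have hφy : φ y = 0 := by rw [e2, ← e1]; exact hg2
      obtain ⟨cc, dd, rfl⟩ := my_repr hdim hind y
      have hdd : dd = 0 := by
        rw [map_add, map_smul, map_smul, hφv, smul_zero, zero_add,
          smul_eq_mul] at hφy
        rcases mul_eq_zero.1 hφy with h | h
        · exact h
        · exact absurd h hφu.ne'
      rcases le_or_gt 0 cc with hcc | hcc
      · exact Or.inl ⟨cc, 0, hcc, le_refl 0, by rw [hdd]; module⟩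
      · exact Or.inr ⟨-cc, 0, by linarith, le_refl 0, by rw [hdd]; module⟩
    · intro hy l
      have hφy : φ y = 0 := by
        rcases hy with ⟨α, β, hα, hβ, rfl⟩ | ⟨α, β, hα, hβ, hw⟩
        · rw [map_add, map_smul, map_smul, hφv, smul_zero, smul_zero, add_zero]
        · have : φ (-y) = 0 := by
            rw [hw, map_add, map_smul, map_smul, hφv, smul_zero, smul_zero,
              add_zero]
          rw [map_neg] at this
          linarith
      have h1 : (1:ℝ) = φ (x + l • y) := by
        rw [map_add, map_smul, hφy, smul_zero, add_zero, hx2]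
      calc (1:ℝ) = φ (x + l • y) := h1
      _ ≤ ‖φ (x + l • y)‖ := le_abs_self _
      _ ≤ ‖φ‖ * ‖x + l • y‖ := φ.le_opNorm _
      _ = ‖x + l • y‖ := by rw [hφn, one_mul]
  · -- independent case
    push_neg at hdep
    have hind : ∀ a b : ℝ, a • v₁ + b • v₂ = 0 → a = 0 ∧ b = 0 := by
      intro a b hab
      by_cases hb : b = 0
      · subst hb
        rw [zero_smul, add_zero] at hab
        rcases smul_eq_zero.1 hab with h | h
        · exact ⟨h, rfl⟩
        · exact absurd h hv₁0
      · exfalso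
        apply hdep (-(b⁻¹ * a))
        have h1 : b • v₂ = -(a • v₁) := by
          rw [add_comm] at hab
          exact add_eq_zero_iff_eq_neg.1 hab
        calc v₂ = (b⁻¹ * b) • v₂ := by rw [inv_mul_cancel₀ hb, one_smul]
        _ = b⁻¹ • (b • v₂) := by rw [mul_smul]
        _ = b⁻¹ • (-(a • v₁)) := by rw [h1]
        _ = (-(b⁻¹ * a)) • v₁ := by rw [smul_neg, smul_smul, neg_smul]
    have hind' : ∀ a b : ℝ, a • v₂ + b • v₁ = 0 → a = 0 ∧ b = 0 := by
      intro a b hab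
      have := hind b a (by rw [add_comm]; exact hab)
      exact ⟨this.2, this.1⟩
    obtain ⟨φ₁, hφ₁n, hφ₁v₁, hφ₁v₂⟩ := my_dual hdim hind
    obtain ⟨φ₂, hφ₂n, hφ₂v₂, hφ₂v₁⟩ := my_dual hdim hind'
    have hsum : φ₁ + φ₂ ≠ 0 := by
      intro h0
      have h1 : (φ₁ + φ₂) v₁ = 0 := by rw [h0]; simp
      rw [ContinuousLinearMap.add_apply, hφ₁v₁, zero_add] at h1
      exact hφ₂v₁.ne' h1
    have hsum' : φ₂ + φ₁ ≠ 0 := by rwa [add_comm] at hsum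
    obtain ⟨z, hz1, hz2⟩ : ∃ z : X, φ₁ z = 1 ∧ φ₂ z = -1 := by
      refine ⟨(-(φ₂ v₁)⁻¹) • v₁ + (φ₁ v₂)⁻¹ • v₂, ?_, ?_⟩
      · rw [map_add, map_smul, map_smul, hφ₁v₁, smul_zero, zero_add,
          smul_eq_mul, inv_mul_cancel₀ hφ₁v₂.ne']
      · rw [map_add, map_smul, map_smul, hφ₂v₂, smul_zero, add_zero,
          smul_eq_mul, neg_mul, inv_mul_cancel₀ hφ₂v₁.ne']
    have hznorm : 1 ≤ ‖z‖ := by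
      calc (1:ℝ) = φ₁ z := hz1.symm
      _ ≤ ‖φ₁ z‖ := le_abs_self _
      _ ≤ ‖φ₁‖ * ‖z‖ := φ₁.le_opNorm z
      _ = ‖z‖ := by rw [hφ₁n, one_mul]
    have hznz : 0 < ‖z‖ := by linarith
    obtain ⟨δ, hδpos, hδ1, hδz⟩ : ∃ δ : ℝ, 0 < δ ∧ δ ≤ 1 ∧ δ * ‖z‖ = 1 := by
      refine ⟨‖z‖⁻¹, by positivity, ?_, inv_mul_cancel₀ hznz.ne'⟩
      have hmz : ‖z‖⁻¹ * ‖z‖ = 1 := inv_mul_cancel₀ hznz.ne'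
      nlinarith [inv_pos.2 hznz]
    obtain ⟨x, hx1, hφ₁x, hφ₂x⟩ :
        ∃ x : X, ‖x‖ = 1 ∧ φ₁ x = δ ∧ φ₂ x = -δ := by
      refine ⟨δ • z, ?_, ?_, ?_⟩
      · rw [norm_smul, Real.norm_eq_abs, abs_of_pos hδpos, hδz]
      · rw [map_smul, hz1, smul_eq_mul, mul_one]
      · rw [map_smul, hz2, smul_eq_mul, mul_neg_one]
    obtain ⟨ε, hε0, hε1, hsq⟩ :
        ∃ ε : ℝ, 0 ≤ ε ∧ ε < 1 ∧ Real.sqrt (1 - ε ^ 2) = δ := by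
      have hδsq : 0 ≤ 1 - δ ^ 2 := by nlinarith
      refine ⟨Real.sqrt (1 - δ ^ 2), Real.sqrt_nonneg _, ?_, ?_⟩
      · have hεsq : Real.sqrt (1 - δ ^ 2) ^ 2 = 1 - δ ^ 2 := Real.sq_sqrt hδsq
        nlinarith [Real.sqrt_nonneg (1 - δ ^ 2), mul_pos hδpos hδpos]
      · have hεsq : Real.sqrt (1 - δ ^ 2) ^ 2 = 1 - δ ^ 2 := Real.sq_sqrt hδsq
        rw [show (1:ℝ) - Real.sqrt (1 - δ ^ 2) ^ 2 = δ ^ 2 by rw [hεsq]; ring,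
          Real.sqrt_sq hδpos.le]
    refine ⟨x, ε, hx1, hε0, hε1, ?_⟩
    simp only [hsq]
    ext y
    simp only [Set.mem_setOf_eq, Set.mem_union, Set.mem_neg, ge_iff_le]
    constructor
    · intro hy
      obtain ⟨g, hg1, hg2, hg3⟩ := my_sep hδpos x y hy
      obtain ⟨cc, dd, rfl⟩ := my_repr hdim hind y
      -- key contradiction machine for strictly mixed signs
      have hcontra : cc * dd < 0 → False := by
        intro hmix
        have hddne : dd ≠ 0 := by
          intro h0; rw [h0, mul_zero] at hmix; exact lt_irrefl _ hmix
        obtain ⟨s, hgv₂⟩ : ∃ s : ℝ, g v₂ = s * φ₁ v₂ :=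
          ⟨g v₂ / φ₁ v₂, (div_mul_cancel₀ _ hφ₁v₂.ne').symm⟩
        obtain ⟨t, hgv₁⟩ : ∃ t : ℝ, g v₁ = t * φ₂ v₁ :=
          ⟨g v₁ / φ₂ v₁, (div_mul_cancel₀ _ hφ₂v₁.ne').symm⟩
        have hgeq : g = s • φ₁ + t • φ₂ := by
          apply my_ext (my_repr hdim hind)
          · rw [ContinuousLinearMap.add_apply, ContinuousLinearMap.smul_apply,
              ContinuousLinearMap.smul_apply, hφ₁v₁, smul_zero, zero_add,
              smul_eq_mul, hgv₁]
          · rw [ContinuousLinearMap.add_apply, ContinuousLinearMap.smul_apply,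
              ContinuousLinearMap.smul_apply, hφ₂v₂, smul_zero, add_zero,
              smul_eq_mul, hgv₂]
        have hgx : g x = δ * (s - t) := by
          rw [hgeq, ContinuousLinearMap.add_apply,
            ContinuousLinearMap.smul_apply, ContinuousLinearMap.smul_apply,
            hφ₁x, hφ₂x, smul_eq_mul, smul_eq_mul]
          ring
        have hst1 : 1 ≤ s - t := by
          rw [hgx] at hg3
          nlinarith [hδpos, hg3]
        have hrel : cc * (t * φ₂ v₁) + dd * (s * φ₁ v₂) = 0 := by
          rw [map_add, map_smul, map_smul, smul_eq_mul, smul_eq_mul, hgv₁,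
            hgv₂] at hg2
          exact hg2
        have hsκ : s = (-(cc * φ₂ v₁) / (dd * φ₁ v₂)) * t := by
          have hdP : dd * φ₁ v₂ ≠ 0 := mul_ne_zero hddne hφ₁v₂.ne'
          field_simp
          linear_combination hrel
        have hκpos : 0 < -(cc * φ₂ v₁) / (dd * φ₁ v₂) := by
          rcases lt_or_gt_of_ne hddne with hdd | hdd
          · have hcc : 0 < cc := by nlinarith [hmix]
            exact div_pos_of_neg_of_neg
              (by nlinarith [mul_pos hcc hφ₂v₁])
              (by nlinarith [mul_pos (neg_pos.2 hdd) hφ₁v₂])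
          · have hcc : cc < 0 := by nlinarith [hmix]
            exact div_pos
              (by nlinarith [mul_pos (neg_pos.2 hcc) hφ₂v₁])
              (by nlinarith [mul_pos hdd hφ₁v₂])
        have htne : t ≠ 0 := by
          intro h0
          rw [h0, mul_zero] at hsκ
          rw [hsκ, h0] at hst1
          norm_num at hst1
        rcases lt_or_gt_of_ne htne with ht0 | ht0
        · have hs0 : s < 0 := by
            nlinarith [hsκ, mul_pos hκpos (neg_pos.2 ht0)]
          have hkey := my_key hsmooth φ₂ φ₁ hφ₂n hφ₁n hsum'
            (show 0 < -s by linarith) (show -s < -t by linarith)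
          have hneg : (-t) • φ₂ + (-s) • φ₁ = -g := by rw [hgeq]; module
          rw [hneg, norm_neg] at hkey
          linarith
        · have hs0 : 0 < s := by nlinarith [hsκ, mul_pos hκpos ht0]
          have hkey := my_key hsmooth φ₁ φ₂ hφ₁n hφ₂n hsum
            ht0 (show t < s by linarith)
          rw [← hgeq] at hkey
          linarith
      rcases le_or_gt 0 cc with hcc | hcc <;> rcases le_or_gt 0 dd with hdd | hdd
      · exact Or.inl ⟨cc, dd, hcc, hdd, rfl⟩
      · rcases eq_or_lt_of_le hcc with hcc0 | hcc0
        · refine Or.inr ⟨0, -dd, le_refl 0, by linarith, ?_⟩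
          rw [← hcc0]; module
        · exact absurd (mul_neg_of_pos_of_neg hcc0 hdd) (fun h => hcontra h)
      · rcases eq_or_lt_of_le hdd with hdd0 | hdd0
        · refine Or.inr ⟨-cc, 0, by linarith, le_refl 0, ?_⟩
          rw [← hdd0]; module
        · exact absurd (mul_neg_of_neg_of_pos hcc hdd0) (fun h => hcontra h)
      · exact Or.inr ⟨-cc, -dd, by linarith, by linarith, by module⟩
    · intro hy
      have hKdir : ∀ α β : ℝ, 0 ≤ α → 0 ≤ β → ∀ l : ℝ,
          δ ≤ ‖x + l • (α • v₁ + β • v₂)‖ := by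
        intro α β hα hβ l
        have ha0 : 0 ≤ α * φ₂ v₁ := mul_nonneg hα hφ₂v₁.le
        have hbb0 : 0 ≤ β * φ₁ v₂ := mul_nonneg hβ hφ₁v₂.le
        by_cases hN : α * φ₂ v₁ + β * φ₁ v₂ = 0
        · have hα0 : α = 0 := by
            have h7 : α * φ₂ v₁ = 0 := by linarith
            rcases mul_eq_zero.1 h7 with h | h
            · exact h
            · exact absurd h hφ₂v₁.ne'
          have hβ0 : β = 0 := by
            have h7 : β * φ₁ v₂ = 0 := by linarith
            rcases mul_eq_zero.1 h7 with h | h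
            · exact h
            · exact absurd h hφ₁v₂.ne'
          rw [hα0, hβ0, zero_smul, zero_smul, zero_add, smul_zero, add_zero,
            hx1]
          exact hδ1
        · have hNpos : 0 < α * φ₂ v₁ + β * φ₁ v₂ :=
            lt_of_le_of_ne (by linarith) (Ne.symm hN)
          obtain ⟨f, hfw, hfx, hfn⟩ : ∃ f : X →L[ℝ] ℝ,
              f (α • v₁ + β • v₂) = 0 ∧
              f x = (α * φ₂ v₁ + β * φ₁ v₂) * δ ∧
              ‖f‖ ≤ α * φ₂ v₁ + β * φ₁ v₂ := by
            refine ⟨(α * φ₂ v₁) • φ₁ + (-(β * φ₁ v₂)) • φ₂, ?_, ?_, ?_⟩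
            · rw [ContinuousLinearMap.add_apply, ContinuousLinearMap.smul_apply,
                ContinuousLinearMap.smul_apply, map_add, map_add, map_smul,
                map_smul, map_smul, map_smul, hφ₁v₁, hφ₂v₂]
              simp only [smul_eq_mul]
              ring
            · rw [ContinuousLinearMap.add_apply, ContinuousLinearMap.smul_apply,
                ContinuousLinearMap.smul_apply, hφ₁x, hφ₂x]
              simp only [smul_eq_mul]
              ring
            · calc ‖(α * φ₂ v₁) • φ₁ + (-(β * φ₁ v₂)) • φ₂‖
                  ≤ ‖(α * φ₂ v₁) • φ₁‖ + ‖(-(β * φ₁ v₂)) • φ₂‖ :=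
                norm_add_le _ _
              _ = |α * φ₂ v₁| * 1 + |(-(β * φ₁ v₂))| * 1 := by
                rw [clm_norm_smul, clm_norm_smul, hφ₁n, hφ₂n]
              _ = α * φ₂ v₁ + β * φ₁ v₂ := by
                rw [abs_neg, abs_of_nonneg ha0, abs_of_nonneg hbb0]; ring
          have h6 : (α * φ₂ v₁ + β * φ₁ v₂) * δ
              = f (x + l • (α • v₁ + β • v₂)) := by
            rw [map_add, map_smul, hfw, smul_zero, add_zero, hfx]
          have h5 : (α * φ₂ v₁ + β * φ₁ v₂) * δ
              ≤ (α * φ₂ v₁ + β * φ₁ v₂) * ‖x + l • (α • v₁ + β • v₂)‖ := by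
            calc (α * φ₂ v₁ + β * φ₁ v₂) * δ
                = f (x + l • (α • v₁ + β • v₂)) := h6
            _ ≤ ‖f (x + l • (α • v₁ + β • v₂))‖ := le_abs_self _
            _ ≤ ‖f‖ * ‖x + l • (α • v₁ + β • v₂)‖ := f.le_opNorm _
            _ ≤ (α * φ₂ v₁ + β * φ₁ v₂) * ‖x + l • (α • v₁ + β • v₂)‖ :=
              mul_le_mul_of_nonneg_right hfn (norm_nonneg _)
          exact le_of_mul_le_mul_left h5 hNpos
      intro l
      rcases hy with ⟨α, β, hα, hβ, rfl⟩ | ⟨α, β, hα, hβ, hw⟩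
      · exact hKdir α β hα hβ l
      · have hthis := hKdir α β hα hβ (-l)
        rw [← hw, neg_smul, smul_neg, neg_neg] at hthis
        exact hthis
end

section
/- In X = ℝ² with the sup norm, let K be the normal cone determined by (−1/2, 1) and (−1, 1). Then there do not exist x ∈ S_X and ε ∈ [0,1) such that F(x, ε) = K ∪ (−K). -/
theorem counterexample_sup_norm :
    ¬ ∃ (x : Fin 2 → ℝ) (ε : ℝ), ‖x‖ = 1 ∧ 0 ≤ ε ∧ ε < 1 ∧
      {y : Fin 2 → ℝ | ∀ l : ℝ, ‖x + l • y‖ ≥ Real.sqrt (1 - ε ^ 2) * ‖x‖} =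
        {w : Fin 2 → ℝ | ∃ α β : ℝ, 0 ≤ α ∧ 0 ≤ β ∧
            w = α • ![(-1 / 2 : ℝ), 1] + β • ![(-1 : ℝ), 1]} ∪
          -{w : Fin 2 → ℝ | ∃ α β : ℝ, 0 ≤ α ∧ 0 ≤ β ∧
            w = α • ![(-1 / 2 : ℝ), 1] + β • ![(-1 : ℝ), 1]} := by
  rintro ⟨x, ε, hx, hε0, hε1, hset⟩
  have hsqrt : Real.sqrt (1 - ε ^ 2) ≤ 1 := Real.sqrt_le_one.mpr (by nlinarith)
  have key : ∀ (v : Fin 2 → ℝ), (v ∉ ({w : Fin 2 → ℝ | ∃ α β : ℝ, 0 ≤ α ∧ 0 ≤ β ∧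
        w = α • ![(-1 / 2 : ℝ), 1] + β • ![(-1 : ℝ), 1]} ∪
      -{w : Fin 2 → ℝ | ∃ α β : ℝ, 0 ≤ α ∧ 0 ≤ β ∧
        w = α • ![(-1 / 2 : ℝ), 1] + β • ![(-1 : ℝ), 1]})) →
      ∃ l : ℝ, ‖x + l • v‖ < Real.sqrt (1 - ε ^ 2) := by
    intro v hv
    have hmem : v ∉ {y : Fin 2 → ℝ | ∀ l : ℝ,
        ‖x + l • y‖ ≥ Real.sqrt (1 - ε ^ 2) * ‖x‖} := by
      rw [hset]; exact hv
    simp only [Set.mem_setOf_eq, not_forall, not_le] at hmem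
    obtain ⟨l, hl⟩ := hmem
    exact ⟨l, by rwa [hx, mul_one] at hl⟩
  have h01 : (![(0:ℝ), 1]) ∉ ({w : Fin 2 → ℝ | ∃ α β : ℝ, 0 ≤ α ∧ 0 ≤ β ∧
        w = α • ![(-1 / 2 : ℝ), 1] + β • ![(-1 : ℝ), 1]} ∪
      -{w : Fin 2 → ℝ | ∃ α β : ℝ, 0 ≤ α ∧ 0 ≤ β ∧
        w = α • ![(-1 / 2 : ℝ), 1] + β • ![(-1 : ℝ), 1]}) := by
    rintro (⟨α, β, hα, hβ, he⟩ | h)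
    · have e0 := congrFun he 0
      have e1 := congrFun he 1
      simp [Matrix.cons_val_zero, Matrix.cons_val_one, Matrix.head_cons] at e0 e1
      linarith
    · rw [Set.mem_neg] at h
      obtain ⟨α, β, hα, hβ, he⟩ := h
      have e1 := congrFun he 1
      simp [Matrix.cons_val_one, Matrix.head_cons] at e1
      linarith
  have h10 : (![(1:ℝ), 0]) ∉ ({w : Fin 2 → ℝ | ∃ α β : ℝ, 0 ≤ α ∧ 0 ≤ β ∧
        w = α • ![(-1 / 2 : ℝ), 1] + β • ![(-1 : ℝ), 1]} ∪
      -{w : Fin 2 → ℝ | ∃ α β : ℝ, 0 ≤ α ∧ 0 ≤ β ∧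
        w = α • ![(-1 / 2 : ℝ), 1] + β • ![(-1 : ℝ), 1]}) := by
    rintro (⟨α, β, hα, hβ, he⟩ | h)
    · have e0 := congrFun he 0
      have e1 := congrFun he 1
      simp [Matrix.cons_val_zero, Matrix.cons_val_one, Matrix.head_cons] at e0 e1
      linarith
    · rw [Set.mem_neg] at h
      obtain ⟨α, β, hα, hβ, he⟩ := h
      have e0 := congrFun he 0
      have e1 := congrFun he 1
      simp [Matrix.cons_val_zero, Matrix.cons_val_one, Matrix.head_cons] at e0 e1
      linarith
  obtain ⟨l1, hl1⟩ := key _ h01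
  obtain ⟨l2, hl2⟩ := key _ h10
  have hx0 : |x 0| < 1 := by
    have h := norm_le_pi_norm (x + l1 • ![(0:ℝ), 1]) 0
    simp [Matrix.cons_val_zero] at h
    calc |x 0| ≤ ‖x + l1 • ![(0:ℝ), 1]‖ := by simpa using h
    _ < Real.sqrt (1 - ε ^ 2) := hl1
    _ ≤ 1 := hsqrt
  have hx1 : |x 1| < 1 := by
    have h := norm_le_pi_norm (x + l2 • ![(1:ℝ), 0]) 1
    simp [Matrix.cons_val_one, Matrix.head_cons] at h
    calc |x 1| ≤ ‖x + l2 • ![(1:ℝ), 0]‖ := by simpa using h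
    _ < Real.sqrt (1 - ε ^ 2) := hl2
    _ ≤ 1 := hsqrt
  have : ‖x‖ < 1 := by
    rw [pi_norm_lt_iff one_pos]
    intro i
    fin_cases i
    · simpa [Real.norm_eq_abs] using hx0
    · simpa [Real.norm_eq_abs] using hx1
  linarith [hx ▸ this]
end

section
/- Let X be a strictly convex real normed space and x₁, x₂ ∈ S_X. If F(x₁, 0) = F(x₂, 0), then x₁ = x₂ or x₁ = −x₂. -/
/-! Let `f` be a functional of norm at most one with `f x₁ = 1`. Its kernel is Birkhoff–James
orthogonal to `x₁`, so by hypothesis also to `x₂`; testing this on `x₂ - f x₂ • x₁` gives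
`|f x₂| ≥ 1`, hence `f (±x₂) = 1`. In a strictly convex space such a functional attains the
value `1` at only one point of the unit sphere, so `x₁ = ±x₂`. -/

section

variable {X : Type*} [NormedAddCommGroup X] [NormedSpace ℝ X]

theorem StrongDual.apply_le_norm_of_norm_le_one {f : StrongDual ℝ X} (hf : ‖f‖ ≤ 1) (x : X) :
    f x ≤ ‖x‖ := by
  simpa using (Real.le_norm_self _).trans (f.le_of_opNorm_le hf x)

theorem norm_le_norm_add_smul_of_apply_eq_zero {f : StrongDual ℝ X} (hf : ‖f‖ ≤ 1) {x y : X}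
    (hfx : f x = ‖x‖) (hfy : f y = 0) (l : ℝ) : ‖x‖ ≤ ‖x + l • y‖ := by
  simpa [hfx, hfy] using StrongDual.apply_le_norm_of_norm_le_one hf (x + l • y)

theorem eq_of_norm_eq_of_apply_eq_norm [StrictConvexSpace ℝ X] {f : StrongDual ℝ X}
    (hf : ‖f‖ ≤ 1) {u v : X} (huv : ‖u‖ = ‖v‖) (hfu : f u = ‖u‖) (hfv : f v = ‖v‖) : u = v := by
  refine eq_of_norm_eq_of_norm_add_eq huv (le_antisymm (norm_add_le u v) ?_)
  simpa [hfu, hfv] using StrongDual.apply_le_norm_of_norm_le_one hf (u + v)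

end

theorem F_zero_unique_strictly_convex {X : Type*} [NormedAddCommGroup X] [NormedSpace ℝ X]
    [StrictConvexSpace ℝ X]
    (x₁ x₂ : X) (hx₁ : ‖x₁‖ = 1) (hx₂ : ‖x₂‖ = 1)
    (hF : {y : X | ∀ l : ℝ, ‖x₁ + l • y‖ ≥ ‖x₁‖} =
        {y : X | ∀ l : ℝ, ‖x₂ + l • y‖ ≥ ‖x₂‖}) :
    x₁ = x₂ ∨ x₁ = -x₂ := by
  obtain ⟨f, hf, hfx₁⟩ := exists_dual_vector'' ℝ x₁
  replace hfx₁ : f x₁ = 1 := by simpa [hx₁] using hfx₁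
  have horth : x₂ - f x₂ • x₁ ∈ {y : X | ∀ l : ℝ, ‖x₁ + l • y‖ ≥ ‖x₁‖} :=
    norm_le_norm_add_smul_of_apply_eq_zero hf (by rw [hfx₁, hx₁]) (by simp [hfx₁])
  rw [hF] at horth
  have hc_ge : 1 ≤ |f x₂| := by
    have h : x₂ + (-1 : ℝ) • (x₂ - f x₂ • x₁) = f x₂ • x₁ := by module
    simpa [h, norm_smul, hx₁, hx₂] using horth (-1)
  have hc_le : |f x₂| ≤ 1 := by simpa [hx₂] using f.le_of_opNorm_le hf x₂
  rcases abs_eq zero_le_one |>.mp (le_antisymm hc_le hc_ge) with hc | hc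
  · exact .inl <| eq_of_norm_eq_of_apply_eq_norm hf (hx₁.trans hx₂.symm)
      (by rw [hfx₁, hx₁]) (by rw [hx₂, hc])
  · exact .inr <| eq_of_norm_eq_of_apply_eq_norm hf (by rw [norm_neg, hx₁, hx₂])
      (by rw [hfx₁, hx₁]) (by rw [norm_neg, hx₂, map_neg, hc, neg_neg])
end

section
/- Let X be a two-dimensional real Banach space, z ∈ X nonzero, and ε ∈ [0,1). Then the set B̄(z, ε) ∩ S_X (intersection of the closed ball of radius ε centered at z with the unit sphere) is either empty or path connected. -/
open Metric Set

theorem ball_inter_sphere_path_connected {X : Type*} [NormedAddCommGroup X] [NormedSpace ℝ X]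
    [FiniteDimensional ℝ X] (hdim : Module.finrank ℝ X = 2)
    (z : X) (hz : z ≠ 0) (ε : ℝ) (hε0 : 0 ≤ ε) (hε1 : ε < 1) :
    Metric.closedBall z ε ∩ Metric.sphere (0 : X) 1 = ∅ ∨
      IsPathConnected (Metric.closedBall z ε ∩ Metric.sphere (0 : X) 1) := by
  rcases Set.eq_empty_or_nonempty (Metric.closedBall z ε ∩ Metric.sphere (0 : X) 1) with h | ⟨y₀, hy₀⟩
  · exact Or.inl h
  right
  obtain ⟨hy₀b, hy₀s⟩ := hy₀
  rw [Metric.mem_closedBall, dist_eq_norm] at hy₀b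
  rw [mem_sphere_zero_iff_norm] at hy₀s
  have hzu : ‖z‖ ≤ 1 + ε := by
    have h1 : ‖z‖ - ‖y₀‖ ≤ ‖z - y₀‖ := norm_sub_norm_le z y₀
    rw [norm_sub_rev] at h1
    linarith
  have hzl : 1 - ε ≤ ‖z‖ := by
    have h1 : ‖y₀‖ - ‖z‖ ≤ ‖y₀ - z‖ := norm_sub_norm_le y₀ z
    linarith
  -- key: for y ∈ K and t ∈ [0,1], the normalized point of (1-t)z + ty is in K
  have key : ∀ t : ℝ, 0 ≤ t → t ≤ 1 → ∀ y : X, ‖y‖ = 1 → ‖y - z‖ ≤ ε →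
      0 < ‖(1 - t) • z + t • y‖ ∧
      ‖(1 - t) • z + t • y‖⁻¹ • ((1 - t) • z + t • y) ∈
        Metric.closedBall z ε ∩ Metric.sphere (0 : X) 1 := by
    intro t ht0 ht1 y hy hyd
    set c : X := (1 - t) • z + t • y with hc
    have hcy : c = y - (1 - t) • (y - z) := by
      rw [hc]; module
    have hβl : 1 - (1 - t) * ε ≤ ‖c‖ := by
      have h1 : ‖y‖ - ‖(1 - t) • (y - z)‖ ≤ ‖y - (1 - t) • (y - z)‖ := norm_sub_norm_le _ _
      rw [← hcy] at h1
      have h2 : ‖(1 - t) • (y - z)‖ = (1 - t) * ‖y - z‖ := by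
        rw [norm_smul, Real.norm_eq_abs, abs_of_nonneg (by linarith)]
      have h3 : (1 - t) * ‖y - z‖ ≤ (1 - t) * ε :=
        mul_le_mul_of_nonneg_left hyd (by linarith)
      linarith
    have hβu : ‖c‖ ≤ 1 + (1 - t) * ε := by
      have h1 : ‖c‖ ≤ ‖(1 - t) • z‖ + ‖t • y‖ := norm_add_le _ _
      have h2 : ‖(1 - t) • z‖ = (1 - t) * ‖z‖ := by
        rw [norm_smul, Real.norm_eq_abs, abs_of_nonneg (by linarith)]
      have h3 : ‖t • y‖ = t := by
        rw [norm_smul, Real.norm_eq_abs, abs_of_nonneg ht0, hy, mul_one]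
      have h4 : (1 - t) * ‖z‖ ≤ (1 - t) * (1 + ε) :=
        mul_le_mul_of_nonneg_left hzu (by linarith)
      nlinarith
    have htε : (1 - t) * ε ≤ ε := by nlinarith
    have hβ0 : 0 < ‖c‖ := by linarith
    refine ⟨hβ0, ?_, ?_⟩
    · rw [Metric.mem_closedBall, dist_eq_norm]
      have hsplit : ‖c‖⁻¹ • c - z = (‖c‖⁻¹ • c - c) + (c - z) := by abel
      have h1 : ‖‖c‖⁻¹ • c - c‖ = |1 - ‖c‖| := by
        have : ‖c‖⁻¹ • c - c = (‖c‖⁻¹ - 1) • c := by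
          rw [sub_smul, one_smul]
        rw [this, norm_smul, Real.norm_eq_abs]
        rw [show (‖c‖⁻¹ - 1 : ℝ) = (1 - ‖c‖) * ‖c‖⁻¹ by field_simp]
        rw [abs_mul, abs_of_nonneg (inv_nonneg.mpr (norm_nonneg c))]
        field_simp
      have h2 : ‖c - z‖ = t * ‖y - z‖ := by
        have : c - z = t • (y - z) := by rw [hc]; module
        rw [this, norm_smul, Real.norm_eq_abs, abs_of_nonneg ht0]
      have h3 : |1 - ‖c‖| ≤ (1 - t) * ε := by
        rw [abs_le]; constructor <;> linarith
      have h4 : t * ‖y - z‖ ≤ t * ε := mul_le_mul_of_nonneg_left hyd ht0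
      calc ‖‖c‖⁻¹ • c - z‖ ≤ ‖‖c‖⁻¹ • c - c‖ + ‖c - z‖ := by
            rw [hsplit]; exact norm_add_le _ _
        _ ≤ (1 - t) * ε + t * ε := by rw [h1, h2]; exact add_le_add h3 h4
        _ = ε := by ring
    · rw [mem_sphere_zero_iff_norm, norm_smul, Real.norm_eq_abs,
        abs_of_nonneg (inv_nonneg.mpr (norm_nonneg c))]
      field_simp
  -- the basepoint p = z/‖z‖
  have hp0 := key 0 le_rfl zero_le_one y₀ hy₀s hy₀b
  have hc0 : (1 - (0:ℝ)) • z + (0:ℝ) • y₀ = z := by module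
  rw [hc0] at hp0
  obtain ⟨-, hpmem⟩ := hp0
  refine ⟨‖z‖⁻¹ • z, hpmem, ?_⟩
  intro y hy
  obtain ⟨hyb, hys⟩ := hy
  rw [Metric.mem_closedBall, dist_eq_norm] at hyb
  rw [mem_sphere_zero_iff_norm] at hys
  -- build the path t ↦ normalize ((1-t)z + ty)
  have hcont : Continuous fun t : unitInterval =>
      ‖(1 - (t : ℝ)) • z + (t : ℝ) • y‖⁻¹ • ((1 - (t : ℝ)) • z + (t : ℝ) • y) := by
    have hc : Continuous fun t : unitInterval =>
        (1 - (t : ℝ)) • z + (t : ℝ) • y := by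
      continuity
    refine Continuous.smul (Continuous.inv₀ (continuous_norm.comp hc) ?_) hc
    intro t
    exact ne_of_gt (key t t.2.1 t.2.2 y hys hyb).1
  refine ⟨⟨⟨fun t => ‖(1 - (t : ℝ)) • z + (t : ℝ) • y‖⁻¹ • ((1 - (t : ℝ)) • z + (t : ℝ) • y),
      hcont⟩, ?_, ?_⟩, ?_⟩
  · show ‖(1 - (0:ℝ)) • z + (0:ℝ) • y‖⁻¹ • ((1 - (0:ℝ)) • z + (0:ℝ) • y) = ‖z‖⁻¹ • z
    rw [show (1 - (0:ℝ)) • z + (0:ℝ) • y = z by module]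
  · show ‖(1 - (1:ℝ)) • z + (1:ℝ) • y‖⁻¹ • ((1 - (1:ℝ)) • z + (1:ℝ) • y) = y
    rw [show (1 - (1:ℝ)) • z + (1:ℝ) • y = y by module, hys]
    norm_num
  · intro t
    exact (key t t.2.1 t.2.2 y hys hyb).2
end

section
/- Let X be a two-dimensional real Banach space, z ∈ S_X, and ε ∈ [0,1). Then [⋃_{α∈ℝ} B̄(αz, ε)] ∩ S_X = A₁ ∪ A₂, where A₁ = [⋃_{α∈[1−ε,1+ε]} B̄(αz, ε)] ∩ S_X and A₂ = [⋃_{α∈[−1−ε,−1+ε]} B̄(αz, ε)] ∩ S_X, and both A₁ and A₂ are connected; in particular the set has at most two connected components. -/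
/-!
A unit vector `x` lies within `ε` of some multiple `α • z`, and then `|1 - |α|| ≤ ε`; the sign
of `α` sorts `x` into the two sets. For connectedness, the distance to `α • z` along the segment
from `x` to `α • z` decreases at least as fast as the norm when `ε ≤ 1`, so by homogeneity the
radial projection of this segment to the sphere stays within `ε` of the ray `ℝ≥0 • z`; it joins
`x` to `z`, and `ε < 1` keeps the segment away from `0`.
-/

open Metric Set

section

variable {E : Type*} [NormedAddCommGroup E] [NormedSpace ℝ E]

lemma abs_one_sub_abs_le_of_mem_closedBall {x z : E} (hx : ‖x‖ = 1) (hz : ‖z‖ = 1) {α ε : ℝ}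
    (h : x ∈ closedBall (α • z) ε) : abs (1 - |α|) ≤ ε := by
  have h' := abs_norm_sub_norm_le x (α • z)
  rw [hx, norm_smul, hz, mul_one, Real.norm_eq_abs, ← dist_eq_norm] at h'
  exact h'.trans h

lemma mem_iUnion_Icc_closedBall_of_nonneg {x z : E} (hx : ‖x‖ = 1) (hz : ‖z‖ = 1) {α ε : ℝ}
    (hα : 0 ≤ α) (h : x ∈ closedBall (α • z) ε) :
    x ∈ ⋃ β ∈ Icc (1 - ε) (1 + ε), closedBall (β • z) ε := by
  have hα' := abs_one_sub_abs_le_of_mem_closedBall hx hz h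
  rw [abs_of_nonneg hα, abs_le] at hα'
  exact mem_biUnion ⟨by linarith, by linarith⟩ h

lemma iUnion_Icc_neg_closedBall (z : E) (ε : ℝ) :
    ⋃ α ∈ Icc (-1 - ε) (-1 + ε), closedBall (α • z) ε =
      ⋃ α ∈ Icc (1 - ε) (1 + ε), closedBall (α • -z) ε := by
  ext x
  simp only [mem_iUnion, exists_prop]
  constructor <;> rintro ⟨α, ⟨h₁, h₂⟩, hx⟩ <;>
    exact ⟨-α, ⟨by linarith, by linarith⟩, by simpa using hx⟩

lemma iUnion_closedBall_inter_sphere_eq {z : E} (hz : ‖z‖ = 1) (ε : ℝ) :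
    (⋃ α : ℝ, closedBall (α • z) ε) ∩ sphere 0 1 =
      ((⋃ α ∈ Icc (1 - ε) (1 + ε), closedBall (α • z) ε) ∩ sphere 0 1) ∪
        ((⋃ α ∈ Icc (-1 - ε) (-1 + ε), closedBall (α • z) ε) ∩ sphere 0 1) := by
  rw [← union_inter_distrib_right, iUnion_Icc_neg_closedBall]
  refine Subset.antisymm (fun x ⟨hxU, hxS⟩ ↦ ⟨?_, hxS⟩) ?_
  · obtain ⟨α, hx⟩ := mem_iUnion.1 hxU
    rw [mem_sphere_zero_iff_norm] at hxS
    rcases le_total 0 α with hα | hα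
    · exact Or.inl (mem_iUnion_Icc_closedBall_of_nonneg hxS hz hα hx)
    · refine Or.inr (mem_iUnion_Icc_closedBall_of_nonneg hxS (by rwa [norm_neg])
        (neg_nonneg.2 hα) ?_)
      rwa [neg_smul_neg]
  · refine inter_subset_inter_left _ (union_subset ?_ ?_) <;>
      refine iUnion₂_subset fun α _ ↦ ?_
    · exact subset_iUnion (fun α : ℝ ↦ closedBall (α • z) ε) α
    · rw [smul_neg, ← neg_smul]
      exact subset_iUnion (fun α : ℝ ↦ closedBall (α • z) ε) (-α)

lemma dist_le_mul_norm_of_mem_segment {x w v : E} {ε : ℝ} (hx : ‖x‖ = 1) (hxw : dist x w ≤ ε)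
    (hε : ε ≤ 1) (hv : v ∈ segment ℝ x w) : dist v w ≤ ε * ‖v‖ := by
  obtain ⟨θ, ⟨hθ₀, hθ₁⟩, rfl⟩ := (segment_eq_image' ℝ x w).subset hv
  dsimp only
  have hε₀ : 0 ≤ ε := dist_nonneg.trans hxw
  have hnorm : 1 - θ * ε ≤ ‖x + θ • (w - x)‖ := by
    have h := norm_sub_norm_le x (-(θ • (w - x)))
    rw [sub_neg_eq_add, norm_neg, norm_smul, Real.norm_of_nonneg hθ₀, hx, ← dist_eq_norm'] at h
    nlinarith
  calc dist (x + θ • (w - x)) w = (1 - θ) * dist x w := by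
        rw [dist_eq_norm, dist_eq_norm, ← abs_of_nonneg (sub_nonneg.2 hθ₁), ← Real.norm_eq_abs,
          ← norm_smul]
        congr 1
        module
    _ ≤ (1 - θ) * ε := by gcongr
    _ ≤ ε * (1 - θ * ε) := by nlinarith [mul_nonneg (mul_nonneg hθ₀ hε₀) (sub_nonneg.2 hε)]
    _ ≤ ε * ‖x + θ • (w - x)‖ := by gcongr

lemma dist_smul_inv_norm_le {v z : E} {α ε : ℝ} (hv₀ : v ≠ 0) (hv : dist v (α • z) ≤ ε * ‖v‖) :
    dist (‖v‖⁻¹ • v) ((‖v‖⁻¹ * α) • z) ≤ ε := by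
  have hpos : 0 < ‖v‖ := norm_pos_iff.2 hv₀
  rw [mul_smul, dist_smul₀, norm_inv, norm_norm, inv_mul_le_iff₀ hpos, mul_comm]
  exact hv

lemma isConnected_iUnion_Icc_closedBall_inter_sphere {z : E} (hz : ‖z‖ = 1) {ε : ℝ}
    (hε₀ : 0 ≤ ε) (hε₁ : ε < 1) :
    IsConnected ((⋃ α ∈ Icc (1 - ε) (1 + ε), closedBall (α • z) ε) ∩ sphere 0 1) := by
  refine ⟨⟨z, mem_biUnion (x := 1) ⟨by linarith, by linarith⟩ (by simpa using hε₀),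
    by simpa using hz⟩, isPreconnected_of_forall z fun x ⟨hxU, hxS⟩ ↦ ?_⟩
  obtain ⟨α, ⟨hα₁, -⟩, hxα⟩ := mem_iUnion₂.1 hxU
  rw [mem_sphere_zero_iff_norm] at hxS
  have hα₀ : 0 < α := by linarith
  have hseg : ∀ v ∈ segment ℝ x (α • z), dist v (α • z) ≤ ε * ‖v‖ := fun v hv ↦
    dist_le_mul_norm_of_mem_segment hxS hxα hε₁.le hv
  have hseg₀ : ∀ v ∈ segment ℝ x (α • z), v ≠ 0 := by
    rintro v hv rfl
    have := hseg 0 hv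
    simp [norm_smul, hz, abs_of_pos hα₀] at this
    linarith
  refine ⟨(fun v ↦ ‖v‖⁻¹ • v) '' segment ℝ x (α • z), ?_, ?_, ?_, ?_⟩
  · rintro _ ⟨v, hv, rfl⟩
    have hv₁ : ‖‖v‖⁻¹ • v‖ = 1 := norm_smul_inv_norm (hseg₀ v hv)
    refine ⟨mem_iUnion_Icc_closedBall_of_nonneg hv₁ hz (by positivity)
      (dist_smul_inv_norm_le (hseg₀ v hv) (hseg v hv)), mem_sphere_zero_iff_norm.2 hv₁⟩
  · refine ⟨α • z, right_mem_segment ℝ x _, ?_⟩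
    simp [norm_smul, hz, abs_of_pos hα₀, smul_smul, hα₀.ne']
  · exact ⟨x, left_mem_segment ℝ x _, by simp [hxS]⟩
  · exact (convex_segment x _).isPreconnected.image _ <|
      ((continuousOn_id.norm.inv₀ fun v hv ↦ norm_ne_zero_iff.2 (hseg₀ v hv)).smul continuousOn_id)

end

theorem union_balls_inter_sphere_two_components_general {X : Type*} [NormedAddCommGroup X]
    [NormedSpace ℝ X]
    (z : X) (hz : ‖z‖ = 1) (ε : ℝ) (hε0 : 0 ≤ ε) (hε1 : ε < 1) :
    ((⋃ α : ℝ, Metric.closedBall (α • z) ε) ∩ Metric.sphere (0 : X) 1 =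
        ((⋃ α ∈ Set.Icc (1 - ε) (1 + ε), Metric.closedBall (α • z) ε) ∩
            Metric.sphere (0 : X) 1) ∪
          ((⋃ α ∈ Set.Icc (-1 - ε) (-1 + ε), Metric.closedBall (α • z) ε) ∩
            Metric.sphere (0 : X) 1)) ∧
      IsConnected ((⋃ α ∈ Set.Icc (1 - ε) (1 + ε), Metric.closedBall (α • z) ε) ∩
          Metric.sphere (0 : X) 1) ∧
      IsConnected ((⋃ α ∈ Set.Icc (-1 - ε) (-1 + ε), Metric.closedBall (α • z) ε) ∩
          Metric.sphere (0 : X) 1) := by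
  refine ⟨iUnion_closedBall_inter_sphere_eq hz ε,
    isConnected_iUnion_Icc_closedBall_inter_sphere hz hε0 hε1, ?_⟩
  rw [iUnion_Icc_neg_closedBall]
  exact isConnected_iUnion_Icc_closedBall_inter_sphere (by rwa [norm_neg]) hε0 hε1

theorem union_balls_inter_sphere_two_components {X : Type*} [NormedAddCommGroup X]
    [NormedSpace ℝ X] [FiniteDimensional ℝ X] (hdim : Module.finrank ℝ X = 2)
    (z : X) (hz : ‖z‖ = 1) (ε : ℝ) (hε0 : 0 ≤ ε) (hε1 : ε < 1) :
    ((⋃ α : ℝ, Metric.closedBall (α • z) ε) ∩ Metric.sphere (0 : X) 1 =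
        ((⋃ α ∈ Set.Icc (1 - ε) (1 + ε), Metric.closedBall (α • z) ε) ∩
            Metric.sphere (0 : X) 1) ∪
          ((⋃ α ∈ Set.Icc (-1 - ε) (-1 + ε), Metric.closedBall (α • z) ε) ∩
            Metric.sphere (0 : X) 1)) ∧
      IsConnected ((⋃ α ∈ Set.Icc (1 - ε) (1 + ε), Metric.closedBall (α • z) ε) ∩
          Metric.sphere (0 : X) 1) ∧
      IsConnected ((⋃ α ∈ Set.Icc (-1 - ε) (-1 + ε), Metric.closedBall (α • z) ε) ∩
          Metric.sphere (0 : X) 1) :=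
  union_balls_inter_sphere_two_components_general z hz ε hε0 hε1
end
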